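/- Let n ≥ 2 and define ρ : PP_n^fd → D_n by ρ(a) = d_{coker(a)}. Then for all a,b ∈ PP_n^fd: (G1) aρ(a) = a; (G2) ρ(ρ(a)) = ρ(a); (G3) ρ(a)ρ(a) = ρ(a); (G4) ρ(a)ρ(b)ρ(a) = ρ(b)ρ(a); (G5) ρ(ρ(a)ρ(b)) = ρ(a)ρ(b); (G6) ρ(ab)ρ(b) = ρ(ab); (G7) ρ(ab) = ρ(ρ(a)b); (G8) ρ(a)b = bρ(ab). In particular, PP_n^fd with the unary operation ρ is a grrac monoid. -/

import Mathlib

open scoped Classical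

namespace PaperFDP

/-- Vertex set of a partition diagram: `inl x` is the upper vertex `x`,
`inr x` is the lower vertex `x'`. -/
abbrev V (n : ℕ) := Fin n ⊕ Fin n

/-- A partition in `P_n`: a set partition of the `2n` points, encoded as an
equivalence relation (a `Setoid`). -/
abbrev Ptn (n : ℕ) := Setoid (V n)

/-- Three-row vertex set (upper ⊕ (middle ⊕ lower)) used for the product graph. -/
abbrev W3 (n : ℕ) := Fin n ⊕ (Fin n ⊕ Fin n)

/-- Embedding of `a`'s vertices: upper row stays, lower row goes to the middle row. -/
def upMid {n : ℕ} : V n → W3 n :=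
  Sum.elim Sum.inl fun x => Sum.inr (Sum.inl x)

/-- Embedding of `b`'s vertices: upper row goes to the middle row, lower row stays. -/
def midLow {n : ℕ} : V n → W3 n :=
  Sum.elim (fun x => Sum.inr (Sum.inl x)) fun x => Sum.inr (Sum.inr x)

/-- Embedding of the outer (upper and lower) rows into the three-row vertex set. -/
def outer {n : ℕ} : V n → W3 n :=
  Sum.elim Sum.inl fun x => Sum.inr (Sum.inr x)

/-- The edge relation of the product graph `Π(a,b)`. -/
def joinRel {n : ℕ} (a b : Ptn n) (u v : W3 n) : Prop :=
  (∃ p q : V n, a.r p q ∧ upMid p = u ∧ upMid q = v) ∨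
  (∃ p q : V n, b.r p q ∧ midLow p = u ∧ midLow q = v)

/-- The product of two partitions: `x,y` lie in the same block of `a*b` iff they are
connected in the product graph. -/
def pmul {n : ℕ} (a b : Ptn n) : Ptn n :=
  Setoid.comap outer (Relation.EqvGen.setoid (joinRel a b))

/-- The identity partition, with blocks `{x, x'}`. -/
def onePtn (n : ℕ) : Ptn n := Setoid.ker (Sum.elim id id)

/-- The partition of a transformation `f` (written on the right): `x` is joined to `(x f)'`. -/
def toPtn {n : ℕ} (f : Fin n → Fin n) : Ptn n := Setoid.ker (Sum.elim f id)

/-- `id_ε`, the partition with blocks `A ∪ A'` for the `ε`-classes `A`. -/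
def idOf {n : ℕ} (ε : Setoid (Fin n)) : Ptn n := Setoid.comap (Sum.elim id id) ε

/-- The kernel of a partition. -/
def kerP {n : ℕ} (a : Ptn n) : Setoid (Fin n) := Setoid.comap Sum.inl a

/-- The cokernel of a partition. -/
def cokerP {n : ℕ} (a : Ptn n) : Setoid (Fin n) := Setoid.comap Sum.inr a

/-- `a` has full domain: every upper point is in a block meeting the lower row. -/
def FullDom {n : ℕ} (a : Ptn n) : Prop :=
  ∀ x : Fin n, ∃ y : Fin n, a.r (Sum.inl x) (Sum.inr y)

/-- The full-domain partition monoid `P_n^fd` as a subset of `P_n`. -/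
def Pfd (n : ℕ) : Set (Ptn n) := {a | FullDom a}

/-- `a` is (the partition of) a permutation, i.e. a unit of `P_n`. -/
def IsPermPtn {n : ℕ} (a : Ptn n) : Prop := ∃ g : Equiv.Perm (Fin n), a = toPtn ⇑g

/-- The singular ideal `Sing(P_n^fd) = P_n^fd ∖ S_n`. -/
def SingPfd (n : ℕ) : Set (Ptn n) := {a | FullDom a ∧ ¬ IsPermPtn a}

/-- The boundary linear order on the `2n` vertices: `1 < … < n < n' < … < 1'`. -/
def ordV {n : ℕ} : V n → ℕ :=
  Sum.elim (fun x => (x : ℕ)) fun x => 2 * n - 1 - (x : ℕ)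

/-- `a` is planar: it can be drawn without crossings, equivalently it is
non-crossing with respect to the boundary order on the `2n` vertices. -/
def Planar {n : ℕ} (a : Ptn n) : Prop :=
  ∀ p q r s : V n, ordV p < ordV q → ordV q < ordV r → ordV r < ordV s →
    a.r p r → a.r q s → a.r p q

/-- The planar full-domain partition monoid `PP_n^fd` as a subset of `P_n`. -/
def PPfd (n : ℕ) : Set (Ptn n) := {a | FullDom a ∧ Planar a}

/-- `η_ij`: the equivalence on `{1,…,n}` whose only nontrivial class is `{i,j}`. -/
def etaOf {n : ℕ} (i j : Fin n) : Setoid (Fin n) :=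
  Setoid.ker fun x => if x = j then i else x

/-- `ē_ij = id_{η_ij}`: the partition with block `{i,j,i',j'}` and blocks `{x,x'}` otherwise. -/
def ebar {n : ℕ} (i j : Fin n) : Ptn n := idOf (etaOf i j)

/-- `t̄_ij`: the transformation sending `j ↦ i` and fixing everything else, as a partition. -/
def tbar {n : ℕ} (i j : Fin n) : Ptn n := toPtn fun x => if x = j then i else x

/-- Evaluation of a word as a genuine (semi)group product of partitions
(the empty word evaluates to the identity partition). -/
def evalWith {A : Type*} {n : ℕ} (g : A → Ptn n) : List A → Ptn n
  | [] => onePtn n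
  | [x] => g x
  | x :: y :: w => pmul (g x) (evalWith g (y :: w))

/-- One-step rewriting using a relation from `R`, in an arbitrary context. -/
def OneStep {A : Type*} (R : List A → List A → Prop) (w w' : List A) : Prop :=
  ∃ u v p q : List A, R p q ∧ w = u ++ p ++ v ∧ w' = u ++ q ++ v

/-- The congruence on the free monoid (or free semigroup) generated by `R`. -/
def PresCong {A : Type*} (R : List A → List A → Prop) : List A → List A → Prop :=
  Relation.EqvGen (OneStep R)

end PaperFDP

namespace PaperFDP

/-- The `ε`-class of `x`, as a set. -/
def clsS {n : ℕ} (ε : Setoid (Fin n)) (x : Fin n) : Set (Fin n) := {y | ε.r x y}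

/-- Two sets are separated if one lies entirely below the other. -/
def SepSets {n : ℕ} (A B : Set (Fin n)) : Prop :=
  (∀ a ∈ A, ∀ b ∈ B, a < b) ∨ (∀ a ∈ A, ∀ b ∈ B, b < a)

/-- `A` is nested by `B`: all of `A` lies strictly between two consecutive elements of `B`. -/
def NestedBy {n : ℕ} (A B : Set (Fin n)) : Prop :=
  ∃ b₁ ∈ B, ∃ b₂ ∈ B, b₁ < b₂ ∧ (∀ b ∈ B, ¬ (b₁ < b ∧ b < b₂)) ∧
    ∀ a ∈ A, b₁ < a ∧ a < b₂

/-- An equivalence is planar if any two of its classes are nested or separated. -/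
def IsPlanarEq {n : ℕ} (ε : Setoid (Fin n)) : Prop :=
  ∀ x y : Fin n, ¬ ε.r x y →
    SepSets (clsS ε x) (clsS ε y) ∨ NestedBy (clsS ε x) (clsS ε y) ∨
      NestedBy (clsS ε y) (clsS ε x)

/-- The class of `x` is un-nested (nested by no other class). -/
def Unnested {n : ℕ} (ε : Setoid (Fin n)) (x : Fin n) : Prop :=
  ∀ y : Fin n, ¬ NestedBy (clsS ε x) (clsS ε y)

/-- The minimum of the `ε`-class of `x`. -/
noncomputable def minCl {n : ℕ} (ε : Setoid (Fin n)) (x : Fin n) : Fin n :=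
  (Finset.univ.filter fun y => ε.r x y).min'
    ⟨x, Finset.mem_filter.mpr ⟨Finset.mem_univ x, ε.iseqv.refl x⟩⟩

/-- The maximum of the `ε`-class of `x`. -/
noncomputable def maxCl {n : ℕ} (ε : Setoid (Fin n)) (x : Fin n) : Fin n :=
  (Finset.univ.filter fun y => ε.r x y).max'
    ⟨x, Finset.mem_filter.mpr ⟨Finset.mem_univ x, ε.iseqv.refl x⟩⟩

/-- The minima of the un-nested `ε`-classes. -/
noncomputable def anchorsF {n : ℕ} (ε : Setoid (Fin n)) : Finset (Fin n) :=
  Finset.univ.filter fun y => Unnested ε y ∧ minCl ε y = y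

/-- The largest minimum-of-an-un-nested-class that is `≤ x`.  (For a planar
equivalence this always exists; junk default otherwise.) -/
noncomputable def anchorBelow {n : ℕ} [NeZero n] (ε : Setoid (Fin n)) (x : Fin n) : Fin n :=
  if h : ((anchorsF ε).filter (· ≤ x)).Nonempty then ((anchorsF ε).filter (· ≤ x)).max' h
  else 0

/-- The "block" map defining `d_η`: an upper vertex `x` goes to the interval
`A_i = [min B_i, max B_i]` (of the un-nested class `B_i`) containing it; a lower
vertex `x'` goes to the `η`-class of `x`.  Blocks are labelled by the minimum of
the corresponding un-nested class, resp. class. -/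
noncomputable def dMap {n : ℕ} [NeZero n] (ε : Setoid (Fin n)) : V n → Fin n :=
  Sum.elim (fun x => anchorBelow ε x) fun x => minCl ε x

/-- The partition `d_η ∈ PP_n^fd`, with blocks `A_i ∪ B_i'` for the un-nested
`η`-classes `B_i` (where `A_i = [min B_i, max B_i]`), and `C'` for the nested
`η`-classes `C`. -/
noncomputable def dEta {n : ℕ} [NeZero n] (ε : Setoid (Fin n)) : Ptn n :=
  Setoid.ker (dMap ε)

/-- `h̄_ij = d_{η_ij}`. -/
noncomputable def hbar {n : ℕ} [NeZero n] (i j : Fin n) : Ptn n := dEta (etaOf i j)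

/-- The monoid `D_n = {d_η : η a planar equivalence}`, as a subset of `PP_n^fd`. -/
def DSet (n : ℕ) [NeZero n] : Set (Ptn n) :=
  {a | ∃ ε : Setoid (Fin n), IsPlanarEq ε ∧ a = dEta ε}

end PaperFDP

namespace PaperFDP

/-- The range map `ρ(a) = d_{coker a}` on `PP_n^fd`. -/
noncomputable def rhoP {n : ℕ} [NeZero n] (a : Ptn n) : Ptn n := dEta (cokerP a)

/-!
The product `ab` is described through the middle row of its product graph, where connectivity is
the join `coker a ⊔ ker b`. Multiplying by `d_ψ` on the right (when `coker c ≤ ψ`) or by `d_ε` on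
the left then has an explicit description through the anchor map `anchorBelow ψ`, sending `x` to
the minimum of the un-nested class whose interval `A_i` contains `x`; (G1), (G3), (G6) and the
absorption `ρ(b)ρ(ab) = ρ(ab)` become bookkeeping with anchors.

The real input is planarity of `φ = coker(ab)`: joining a non-crossing equivalence with one whose
classes are intervals (the upper parts of the blocks of `b`) keeps it non-crossing, and the classes
of `φ` are those of `coker b` with some un-nested ones merged. For (G8), the lower point of an
anchor of `coker a` has an un-nested `φ`-class, so `x ↦ anchorBelow φ (lower x)` factors through
`anchorBelow (coker a)`. (G5) follows from (G8) and absorption, and (G4) from (G8), (G3) and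
associativity, which holds since both bracketings compute connectivity in a four-row graph.
-/

section Classes

variable {n : ℕ} (ε : Setoid (Fin n))

lemma minCl_rel (x : Fin n) : ε.r x (minCl ε x) :=
  (Finset.mem_filter.mp (Finset.min'_mem _ _)).2

lemma minCl_le {x y : Fin n} (h : ε.r x y) : minCl ε x ≤ y :=
  Finset.min'_le _ _ (Finset.mem_filter.mpr ⟨Finset.mem_univ y, h⟩)

lemma minCl_le_self (x : Fin n) : minCl ε x ≤ x := minCl_le ε (ε.refl' x)

lemma maxCl_rel (x : Fin n) : ε.r x (maxCl ε x) :=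
  (Finset.mem_filter.mp (Finset.max'_mem _ _)).2

lemma le_maxCl {x y : Fin n} (h : ε.r x y) : y ≤ maxCl ε x :=
  Finset.le_max' _ _ (Finset.mem_filter.mpr ⟨Finset.mem_univ y, h⟩)

lemma minCl_eq_of_rel {x y : Fin n} (h : ε.r x y) : minCl ε x = minCl ε y :=
  le_antisymm (minCl_le ε (ε.trans' h (minCl_rel ε y)))
    (minCl_le ε (ε.trans' (ε.symm' h) (minCl_rel ε x)))

lemma maxCl_eq_of_rel {x y : Fin n} (h : ε.r x y) : maxCl ε x = maxCl ε y :=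
  le_antisymm (le_maxCl ε (ε.trans' (ε.symm' h) (maxCl_rel ε x)))
    (le_maxCl ε (ε.trans' h (maxCl_rel ε y)))

lemma minCl_eq_minCl_iff {x y : Fin n} : minCl ε x = minCl ε y ↔ ε.r x y := by
  refine ⟨fun h => ε.trans' (minCl_rel ε x) ?_, minCl_eq_of_rel ε⟩
  rw [h]
  exact ε.symm' (minCl_rel ε y)

lemma minCl_minCl (x : Fin n) : minCl ε (minCl ε x) = minCl ε x :=
  (minCl_eq_of_rel ε (minCl_rel ε x)).symm

variable {ε}

lemma clsS_eq_of_rel {x y : Fin n} (h : ε.r x y) : clsS ε x = clsS ε y := by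
  ext z
  exact ⟨ε.trans' (ε.symm' h), ε.trans' h⟩

lemma Unnested.of_rel {x y : Fin n} (hx : Unnested ε x) (h : ε.r x y) : Unnested ε y := by
  intro z
  rw [← clsS_eq_of_rel h]
  exact hx z

lemma SepSets.symm {A B : Set (Fin n)} (h : SepSets A B) : SepSets B A :=
  (Or.symm h).imp (fun h b hb a ha => h a ha b hb) fun h b hb a ha => h a ha b hb

lemma NestedBy.trans {A B C : Set (Fin n)} (hAB : NestedBy A B) (hBC : NestedBy B C) :
    NestedBy A C := by
  obtain ⟨b₁, hb₁, b₂, hb₂, -, -, hA⟩ := hAB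
  obtain ⟨c₁, hc₁, c₂, hc₂, hc, hgap, hB⟩ := hBC
  exact ⟨c₁, hc₁, c₂, hc₂, hc, hgap, fun a ha =>
    ⟨(hB b₁ hb₁).1.trans (hA a ha).1, (hA a ha).2.trans (hB b₂ hb₂).2⟩⟩

lemma minCl_of_mem_anchorsF {c : Fin n} (hc : c ∈ anchorsF ε) : minCl ε c = c :=
  (Finset.mem_filter.mp hc).2.2

lemma unnested_of_mem_anchorsF {c : Fin n} (hc : c ∈ anchorsF ε) : Unnested ε c :=
  (Finset.mem_filter.mp hc).2.1

lemma minCl_mem_anchorsF {x : Fin n} (hx : Unnested ε x) : minCl ε x ∈ anchorsF ε :=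
  Finset.mem_filter.mpr ⟨Finset.mem_univ _, hx.of_rel (minCl_rel ε x), minCl_minCl ε x⟩

lemma unnested_of_minCl_mem_anchorsF {x : Fin n} (hx : minCl ε x ∈ anchorsF ε) :
    Unnested ε x :=
  (unnested_of_mem_anchorsF hx).of_rel (ε.symm' (minCl_rel ε x))

end Classes

section Anchors

variable {n : ℕ} [NeZero n] (ε : Setoid (Fin n))

lemma unnested_zero : Unnested ε 0 := fun _ ⟨_, _, _, _, _, _, h⟩ =>
  (Fin.zero_le _).not_gt (h 0 (ε.refl' 0)).1

lemma zero_mem_anchorsF : (0 : Fin n) ∈ anchorsF ε :=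
  Finset.mem_filter.mpr ⟨Finset.mem_univ _, unnested_zero ε,
    le_antisymm (minCl_le_self ε 0) (Fin.zero_le _)⟩

lemma anchorBelow_eq_max' (x : Fin n) :
    anchorBelow ε x = ((anchorsF ε).filter (· ≤ x)).max'
      ⟨0, Finset.mem_filter.mpr ⟨zero_mem_anchorsF ε, Fin.zero_le _⟩⟩ :=
  dif_pos _

lemma anchorBelow_mem_anchorsF (x : Fin n) : anchorBelow ε x ∈ anchorsF ε := by
  rw [anchorBelow_eq_max']
  exact (Finset.mem_filter.mp (Finset.max'_mem _ _)).1

lemma anchorBelow_le (x : Fin n) : anchorBelow ε x ≤ x := by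
  rw [anchorBelow_eq_max']
  exact (Finset.mem_filter.mp (Finset.max'_mem ((anchorsF ε).filter (· ≤ x)) _)).2

variable {ε}

lemma le_anchorBelow {c x : Fin n} (hc : c ∈ anchorsF ε) (hcx : c ≤ x) :
    c ≤ anchorBelow ε x := by
  rw [anchorBelow_eq_max']
  exact Finset.le_max' _ c (Finset.mem_filter.mpr ⟨hc, hcx⟩)

lemma anchorBelow_of_mem_anchorsF {c : Fin n} (hc : c ∈ anchorsF ε) : anchorBelow ε c = c :=
  le_antisymm (anchorBelow_le ε c) (le_anchorBelow hc le_rfl)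

lemma anchorBelow_mono : Monotone (anchorBelow ε) := fun x _ h =>
  le_anchorBelow (anchorBelow_mem_anchorsF ε x) ((anchorBelow_le ε x).trans h)

lemma anchorBelow_anchorBelow (x : Fin n) : anchorBelow ε (anchorBelow ε x) = anchorBelow ε x :=
  anchorBelow_of_mem_anchorsF (anchorBelow_mem_anchorsF ε x)

lemma minCl_anchorBelow (x : Fin n) : minCl ε (anchorBelow ε x) = anchorBelow ε x :=
  minCl_of_mem_anchorsF (anchorBelow_mem_anchorsF ε x)

lemma anchorBelow_eq_minCl_iff {x y : Fin n} :
    anchorBelow ε x = minCl ε y ↔ ε.r (anchorBelow ε x) y := by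
  rw [← minCl_eq_minCl_iff, minCl_anchorBelow]

end Anchors

section PlanarEquivalence

variable {n : ℕ} {ε : Setoid (Fin n)}

lemma exists_unnested_nestedBy {y : Fin n} (hy : ¬ Unnested ε y) :
    ∃ z, Unnested ε z ∧ NestedBy (clsS ε y) (clsS ε z) := by
  induction hm : minCl ε y using WellFoundedLT.induction generalizing y with
  | ind m ih =>
    obtain ⟨z, hz⟩ : ∃ z, NestedBy (clsS ε y) (clsS ε z) := by
      simpa [Unnested] using hy
    by_cases hzu : Unnested ε z
    · exact ⟨z, hzu, hz⟩
    obtain ⟨b₁, hb₁, _, _, _, _, hin⟩ := id hz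
    have hlt : minCl ε z < m := hm ▸ (minCl_le ε hb₁).trans_lt (hin _ (minCl_rel ε y)).1
    obtain ⟨w, hw, hzw⟩ := ih _ hlt hzu rfl
    exact ⟨w, hw, hz.trans hzw⟩

lemma exists_unnested_minCl_le_le_maxCl (x : Fin n) :
    ∃ z, Unnested ε z ∧ minCl ε z ≤ x ∧ x ≤ maxCl ε z := by
  by_cases hx : Unnested ε x
  · exact ⟨x, hx, minCl_le_self ε x, le_maxCl ε (ε.refl' x)⟩
  obtain ⟨z, hz, b₁, hb₁, b₂, hb₂, _, _, hin⟩ := exists_unnested_nestedBy hx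
  exact ⟨z, hz, (minCl_le ε hb₁).trans (hin x (ε.refl' x)).1.le,
    (hin x (ε.refl' x)).2.le.trans (le_maxCl ε hb₂)⟩

lemma IsPlanarEq.sepSets_of_unnested (hε : IsPlanarEq ε) {x y : Fin n} (h : ¬ ε.r x y)
    (hx : Unnested ε x) (hy : Unnested ε y) : SepSets (clsS ε x) (clsS ε y) :=
  (hε x y h).resolve_right (not_or_intro (hx y) (hy x))

lemma IsPlanarEq.rel_of_lt_of_lt (hε : IsPlanarEq ε) {y z z' : Fin n} (hy : Unnested ε y)
    (hz : ε.r z z') (h₁ : z < y) (h₂ : y < z') : ε.r z y := by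
  by_contra hzy
  rcases hε z y hzy with (hs | hs) | ⟨_, _, _, _, _, hgap, hin⟩ | hn
  · exact (hs z' hz y (ε.refl' y)).not_gt h₂
  · exact (hs z (ε.refl' z) y (ε.refl' y)).not_gt h₁
  · exact hgap y (ε.refl' y) ⟨(hin z (ε.refl' z)).1.trans h₁, h₂.trans (hin z' hz).2⟩
  · exact hy z hn

lemma IsPlanarEq.not_mem_anchorsF (hε : IsPlanarEq ε) {c y : Fin n} (h₁ : minCl ε y < c)
    (h₂ : c ≤ y) : c ∉ anchorsF ε := by
  intro hc
  by_cases hcy : ε.r c y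
  · exact h₁.ne (minCl_of_mem_anchorsF hc ▸ minCl_eq_of_rel ε hcy).symm
  rcases hε c y hcy with (hs | hs) | hn | ⟨b₁, hb₁, _, _, _, _, hin⟩
  · exact (hs c (ε.refl' c) _ (minCl_rel ε y)).not_gt h₁
  · exact (hs c (ε.refl' c) y (ε.refl' y)).not_ge h₂
  · exact unnested_of_mem_anchorsF hc y hn
  · exact (minCl_of_mem_anchorsF hc ▸ minCl_le ε hb₁).not_gt
      ((hin _ (minCl_rel ε y)).1.trans h₁)

variable [NeZero n]

lemma IsPlanarEq.anchorBelow_le_minCl (hε : IsPlanarEq ε) (x : Fin n) :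
    anchorBelow ε x ≤ minCl ε x :=
  not_lt.mp fun h => hε.not_mem_anchorsF h (anchorBelow_le ε x) (anchorBelow_mem_anchorsF ε x)

lemma IsPlanarEq.anchorBelow_eq_of_rel (hε : IsPlanarEq ε) {x y : Fin n} (h : ε.r x y) :
    anchorBelow ε x = anchorBelow ε y := by
  have key : ∀ u v, ε.r u v → anchorBelow ε u ≤ anchorBelow ε v := fun u v huv =>
    le_anchorBelow (anchorBelow_mem_anchorsF ε u)
      ((hε.anchorBelow_le_minCl u).trans (minCl_eq_of_rel ε huv ▸ minCl_le_self ε v))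
  exact le_antisymm (key x y h) (key y x (ε.symm' h))

lemma IsPlanarEq.anchorBelow_eq_minCl (hε : IsPlanarEq ε) {y : Fin n} (hy : Unnested ε y) :
    anchorBelow ε y = minCl ε y :=
  le_antisymm (hε.anchorBelow_le_minCl y) (le_anchorBelow (minCl_mem_anchorsF hy)
    (minCl_le_self ε y))

lemma IsPlanarEq.anchorBelow_eq_minCl_of_le_of_le (hε : IsPlanarEq ε) {x z : Fin n}
    (hz : Unnested ε z) (h₁ : minCl ε z ≤ x) (h₂ : x ≤ maxCl ε z) :
    anchorBelow ε x = minCl ε z := by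
  refine (le_anchorBelow (minCl_mem_anchorsF hz) h₁).antisymm' (not_lt.mp fun hlt => ?_)
  set c := anchorBelow ε x
  have hc := anchorBelow_mem_anchorsF ε x
  have hcz : ¬ ε.r c z := fun h =>
    hlt.ne ((minCl_eq_of_rel ε h).symm.trans (minCl_of_mem_anchorsF hc))
  rcases hε.sepSets_of_unnested hcz (unnested_of_mem_anchorsF hc) hz with hs | hs
  · exact (hs c (ε.refl' c) _ (minCl_rel ε z)).not_gt hlt
  · exact (hs c (ε.refl' c) _ (maxCl_rel ε z)).not_ge ((anchorBelow_le ε x).trans h₂)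

lemma IsPlanarEq.le_maxCl_anchorBelow (hε : IsPlanarEq ε) (x : Fin n) :
    x ≤ maxCl ε (anchorBelow ε x) := by
  obtain ⟨z, hz, h₁, h₂⟩ := exists_unnested_minCl_le_le_maxCl (ε := ε) x
  rw [hε.anchorBelow_eq_minCl_of_le_of_le hz h₁ h₂, maxCl_eq_of_rel ε (ε.symm' (minCl_rel ε z))]
  exact h₂

end PlanarEquivalence

section NonCrossing

variable {n : ℕ}

def NonCrossing (ε : Setoid (Fin n)) : Prop :=
  ∀ w x y z : Fin n, w < x → x < y → y < z → ε.r w y → ε.r x z → ε.r y z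

variable {ε : Setoid (Fin n)}

lemma IsPlanarEq.nonCrossing (hε : IsPlanarEq ε) : NonCrossing ε := by
  intro w x y z hwx hxy hyz hwy hxz
  suffices hwx' : ε.r w x from ε.trans' (ε.trans' (ε.symm' hwy) hwx') hxz
  by_contra hne
  rcases hε w x hne with (hs | hs) | ⟨_, _, _, _, _, hgap, hin⟩ | ⟨_, _, _, _, _, hgap, hin⟩
  · exact (hs y hwy x (ε.refl' x)).not_gt hxy
  · exact (hs w (ε.refl' w) z hxz).not_gt ((hwx.trans hxy).trans hyz)
  · exact hgap x (ε.refl' x) ⟨(hin w (ε.refl' w)).1.trans hwx, hxy.trans (hin y hwy).2⟩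
  · exact hgap y hwy ⟨(hin x (ε.refl' x)).1.trans hxy, hyz.trans (hin z hxz).2⟩

lemma NonCrossing.sepSets_or_nestedBy (hε : NonCrossing ε) {x y : Fin n} (hxy : ¬ ε.r x y)
    (hlt : minCl ε x < minCl ε y) :
    SepSets (clsS ε x) (clsS ε y) ∨ NestedBy (clsS ε y) (clsS ε x) := by
  have hdisj : ∀ c, ε.r x c → ¬ ε.r y c := fun c hx hy => hxy (ε.trans' hx (ε.symm' hy))
  have beyond : ∀ p, ε.r x p → minCl ε y < p → ∀ q, ε.r y q → q < p := by
    intro p hp hyp q hq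
    refine lt_of_le_of_ne (not_lt.mp fun hpq => hdisj q ?_ hq) fun h => hdisj p hp (h ▸ hq)
    exact ε.trans' hp (hε _ _ _ _ hlt hyp hpq (ε.trans' (ε.symm' (minCl_rel ε x)) hp)
      (ε.trans' (ε.symm' (minCl_rel ε y)) hq))
  by_cases hsep : ∀ p, ε.r x p → p < minCl ε y
  · exact Or.inl (Or.inl fun p hp q hq => (hsep p hp).trans_le (minCl_le ε hq))
  simp only [not_forall, not_lt] at hsep
  obtain ⟨p, hp, hyp⟩ := hsep
  -- `NestedBy` is witnessed by the last point of the class of `x` before the class of `y`,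
  -- and the next point of the class of `x`
  let S₁ := Finset.univ.filter fun c => ε.r x c ∧ c < minCl ε y
  have hS₁ : S₁.Nonempty := ⟨minCl ε x, by simp [S₁, minCl_rel ε x, hlt]⟩
  have hb₁ := Finset.mem_filter.mp (S₁.max'_mem hS₁)
  let S₂ := Finset.univ.filter fun c => ε.r x c ∧ S₁.max' hS₁ < c
  have hS₂ : S₂.Nonempty :=
    ⟨p, Finset.mem_filter.mpr ⟨Finset.mem_univ _, hp, hb₁.2.2.trans_le hyp⟩⟩
  have hb₂ := Finset.mem_filter.mp (S₂.min'_mem hS₂)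
  have hb₂y : minCl ε y < S₂.min' hS₂ := by
    refine lt_of_le_of_ne (not_lt.mp fun h => ?_) fun h => hdisj _ hb₂.2.1 (h ▸ minCl_rel ε y)
    exact hb₂.2.2.not_ge (S₁.le_max' _ (by simp [S₁, hb₂.2.1, h]))
  refine Or.inr ⟨_, hb₁.2.1, _, hb₂.2.1, hb₂.2.2, fun c hc ⟨h₁, h₂⟩ => ?_, fun q hq =>
    ⟨hb₁.2.2.trans_le (minCl_le ε hq), beyond _ hb₂.2.1 hb₂y q hq⟩⟩
  exact h₂.not_ge (S₂.min'_le _ (Finset.mem_filter.mpr ⟨Finset.mem_univ _, hc, h₁⟩))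

lemma NonCrossing.isPlanarEq (hε : NonCrossing ε) : IsPlanarEq ε := by
  intro x y hxy
  rcases lt_trichotomy (minCl ε x) (minCl ε y) with h | h | h
  · exact (hε.sepSets_or_nestedBy hxy h).imp_right Or.inr
  · exact absurd ((minCl_eq_minCl_iff ε).mp h) hxy
  · exact (hε.sepSets_or_nestedBy (fun h' => hxy (ε.symm' h')) h).imp SepSets.symm Or.inl

end NonCrossing

section PlanarPartition

variable {n : ℕ}

lemma ordV_inl_lt_inl_iff {x x' : Fin n} : ordV (.inl x : V n) < ordV (.inl x') ↔ x < x' :=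
  Fin.lt_def.symm

lemma ordV_inr_lt_inr_iff {y y' : Fin n} : ordV (.inr y : V n) < ordV (.inr y') ↔ y' < y := by
  simp only [ordV, Sum.elim_inr, Fin.lt_def]
  omega

lemma ordV_inl_lt_inr (x y : Fin n) : ordV (.inl x : V n) < ordV (.inr y) := by
  simp only [ordV, Sum.elim_inl, Sum.elim_inr]
  omega

lemma not_ordV_inr_lt_inl (x y : Fin n) : ¬ ordV (.inr y : V n) < ordV (.inl x) :=
  (ordV_inl_lt_inr x y).asymm

variable {a : Ptn n}

lemma Planar.nonCrossing_cokerP (ha : Planar a) : NonCrossing (cokerP a) :=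
  fun w x y z hwx hxy hyz hwy hxz => a.symm' <|
    ha (.inr z) (.inr y) (.inr x) (.inr w) (ordV_inr_lt_inr_iff.mpr hyz)
      (ordV_inr_lt_inr_iff.mpr hxy) (ordV_inr_lt_inr_iff.mpr hwx) (a.symm' hxz) (a.symm' hwy)

lemma Planar.isPlanarEq_cokerP (ha : Planar a) : IsPlanarEq (cokerP a) :=
  ha.nonCrossing_cokerP.isPlanarEq

/-- An enclosing class would have to cross the edge to the upper row. -/
lemma Planar.unnested_cokerP (ha : Planar a) {x y : Fin n} (h : a.r (.inl x) (.inr y)) :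
    Unnested (cokerP a) y := by
  rintro z ⟨b₁, hb₁, b₂, hb₂, -, -, hin⟩
  have hy := hin y ((cokerP a).refl' y)
  have hxb₂ : a.r (.inl x) (.inr b₂) :=
    ha (.inl x) (.inr b₂) (.inr y) (.inr b₁) (ordV_inl_lt_inr x b₂)
      (ordV_inr_lt_inr_iff.mpr hy.2) (ordV_inr_lt_inr_iff.mpr hy.1) h
      ((cokerP a).trans' ((cokerP a).symm' hb₂) hb₁)
  exact (hin b₂ (a.trans' (a.symm' h) hxb₂)).2.false

lemma Planar.rel_inl_inl_of_lt_of_lt (ha : Planar a) {x x' y y' : Fin n}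
    (h : a.r (.inl x) (.inr y)) (h' : a.r (.inl x') (.inr y')) (hx : x < x') (hy : y' < y) :
    a.r (.inl x) (.inl x') :=
  ha _ _ _ _ (ordV_inl_lt_inl_iff.mpr hx) (ordV_inl_lt_inr _ _) (ordV_inr_lt_inr_iff.mpr hy) h h'

lemma Planar.rel_inl_inr_of_lt_of_lt (ha : Planar a) {x y z₁ z₂ : Fin n}
    (h : a.r (.inl x) (.inr y)) (hz : a.r (.inr z₁) (.inr z₂)) (h₁ : z₁ < y) (h₂ : y < z₂) :
    a.r (.inl x) (.inr z₂) :=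
  ha _ _ _ _ (ordV_inl_lt_inr _ _) (ordV_inr_lt_inr_iff.mpr h₂) (ordV_inr_lt_inr_iff.mpr h₁) h
    (a.symm' hz)

lemma Planar.rel_inl_of_le_of_le (ha : Planar a) (hfd : FullDom a) {x x' u : Fin n}
    (h : a.r (.inl x) (.inl x')) (h₁ : x ≤ u) (h₂ : u ≤ x') : a.r (.inl x) (.inl u) := by
  rcases h₁.eq_or_lt with rfl | h₁
  · exact a.refl' _
  rcases h₂.eq_or_lt with rfl | h₂
  · exact h
  obtain ⟨y, hy⟩ := hfd u
  exact ha _ _ _ _ (ordV_inl_lt_inl_iff.mpr h₁) (ordV_inl_lt_inl_iff.mpr h₂) (ordV_inl_lt_inr _ _)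
    h hy

lemma Planar.lower_lt_of_upper_lt (ha : Planar a) {x x' y y' : Fin n}
    (h : a.r (.inl x) (.inr y)) (h' : a.r (.inl x') (.inr y')) (hx : x < x')
    (hxx' : ¬ a.r (.inl x) (.inl x')) : y < y' := by
  rcases lt_trichotomy y y' with hy | rfl | hy
  · exact hy
  · exact absurd (a.trans' h (a.symm' h')) hxx'
  · exact absurd (ha.rel_inl_inl_of_lt_of_lt h h' hx hy) hxx'

lemma Planar.upper_lt_of_lower_lt (ha : Planar a) {x x' y y' : Fin n}
    (h : a.r (.inl x) (.inr y)) (h' : a.r (.inl x') (.inr y')) (hy : y < y')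
    (hxx' : ¬ a.r (.inl x) (.inl x')) : x < x' := by
  rcases lt_trichotomy x x' with hx | rfl | hx
  · exact hx
  · exact absurd (a.refl' _) hxx'
  · exact absurd (a.symm' (ha.rel_inl_inl_of_lt_of_lt h' h hx hy)) hxx'

end PlanarPartition

section Product

variable {n : ℕ}

lemma ptn_ext {a b : Ptn n}
    (hxx : ∀ x x', a.r (.inl x) (.inl x') ↔ b.r (.inl x) (.inl x'))
    (hxy : ∀ x y, a.r (.inl x) (.inr y) ↔ b.r (.inl x) (.inr y))
    (hyy : cokerP a = cokerP b) : a = b := by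
  ext u v
  rcases u with x | y <;> rcases v with x' | y'
  · exact hxx x x'
  · exact hxy x y'
  · exact ⟨fun h => b.symm' ((hxy x' y).mp (a.symm' h)),
      fun h => a.symm' ((hxy x' y).mpr (b.symm' h))⟩
  · exact Setoid.ext_iff.mp hyy y y'

/-- Connectivity of the middle row of the product graph `Π(a, b)`. -/
def midRel (a b : Ptn n) : Fin n → Fin n → Prop :=
  Relation.EqvGen fun m m' => a.r (.inr m) (.inr m') ∨ b.r (.inl m) (.inl m')

variable {a b : Ptn n} {m m' m'' : Fin n}

lemma midRel_refl (m : Fin n) : midRel a b m m := Relation.EqvGen.refl m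

lemma midRel.symm (h : midRel a b m m') : midRel a b m' m := Relation.EqvGen.symm _ _ h

lemma midRel.trans (h : midRel a b m m') (h' : midRel a b m' m'') : midRel a b m m'' :=
  Relation.EqvGen.trans _ _ _ h h'

lemma midRel_of_coker (h : a.r (.inr m) (.inr m')) : midRel a b m m' :=
  Relation.EqvGen.rel _ _ (.inl h)

lemma midRel_of_ker (h : b.r (.inl m) (.inl m')) : midRel a b m m' :=
  Relation.EqvGen.rel _ _ (.inr h)

lemma rel_of_midRel {s : Setoid (Fin n)} (ha : ∀ m m', a.r (.inr m) (.inr m') → s.r m m')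
    (hb : ∀ m m', b.r (.inl m) (.inl m') → s.r m m') (h : midRel a b m m') : s.r m m' :=
  Setoid.eqvGen_le (fun _ _ h => h.elim (ha _ _) (hb _ _)) h

/-- `touch a b u m`: the vertex `u` of the product graph is connected to the middle
vertex `m` through the middle row. -/
def touch (a b : Ptn n) : W3 n → Fin n → Prop
  | .inl x, m => ∃ m₀, a.r (.inl x) (.inr m₀) ∧ midRel a b m₀ m
  | .inr (.inl m₀), m => midRel a b m₀ m
  | .inr (.inr y), m => ∃ m₀, b.r (.inl m₀) (.inr y) ∧ midRel a b m₀ m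

lemma touch.midRel_trans {u : W3 n} (h : touch a b u m) (h' : midRel a b m m') :
    touch a b u m' := by
  rcases u with x | m₀ | y
  · obtain ⟨m₀, h₀, h₁⟩ := h
    exact ⟨m₀, h₀, h₁.trans h'⟩
  · exact midRel.trans h h'
  · obtain ⟨m₀, h₀, h₁⟩ := h
    exact ⟨m₀, h₀, h₁.trans h'⟩

lemma touch.midRel {u : W3 n} (h : touch a b u m) (h' : touch a b u m') : midRel a b m m' := by
  rcases u with x | m₀ | y
  · obtain ⟨m₀, h₀, h₁⟩ := h
    obtain ⟨m₁, h₂, h₃⟩ := h'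
    exact h₁.symm.trans ((midRel_of_coker (a.trans' (a.symm' h₀) h₂)).trans h₃)
  · exact midRel.trans (midRel.symm h) h'
  · obtain ⟨m₀, h₀, h₁⟩ := h
    obtain ⟨m₁, h₂, h₃⟩ := h'
    exact h₁.symm.trans ((midRel_of_ker (b.trans' h₀ (b.symm' h₂))).trans h₃)

lemma touch_inl_of_rel {x x' : Fin n} (h : a.r (.inl x) (.inl x')) (h' : touch a b (.inl x') m) :
    touch a b (.inl x) m :=
  let ⟨m₀, h₀, h₁⟩ := h'
  ⟨m₀, a.trans' h h₀, h₁⟩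

lemma touch_inr_of_rel {y y' : Fin n} (h : b.r (.inr y) (.inr y'))
    (h' : touch a b (.inr (.inr y')) m) : touch a b (.inr (.inr y)) m :=
  let ⟨m₀, h₀, h₁⟩ := h'
  ⟨m₀, b.trans' h₀ (b.symm' h), h₁⟩

/-- Connectivity in the product graph: besides upper-upper edges of `a` and lower-lower edges
of `b`, every connection passes through the middle row. -/
def prodRel (a b : Ptn n) (u v : W3 n) : Prop :=
  (∃ x x', u = .inl x ∧ v = .inl x' ∧ a.r (.inl x) (.inl x')) ∨
  (∃ y y', u = .inr (.inr y) ∧ v = .inr (.inr y') ∧ b.r (.inr y) (.inr y')) ∨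
  ∃ m, touch a b u m ∧ touch a b v m

lemma prodRel_equivalence : Equivalence (prodRel a b) where
  refl u := by
    rcases u with x | m | y
    exacts [.inl ⟨x, x, rfl, rfl, a.refl' _⟩, .inr (.inr ⟨m, midRel_refl m, midRel_refl m⟩),
      .inr (.inl ⟨y, y, rfl, rfl, b.refl' _⟩)]
  symm := by
    rintro u v (⟨x, x', rfl, rfl, h⟩ | ⟨y, y', rfl, rfl, h⟩ | ⟨m, hu, hv⟩)
    exacts [.inl ⟨x', x, rfl, rfl, a.symm' h⟩, .inr (.inl ⟨y', y, rfl, rfl, b.symm' h⟩),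
      .inr (.inr ⟨m, hv, hu⟩)]
  trans := by
    rintro u v w (⟨x, x', rfl, rfl, h⟩ | ⟨y, y', rfl, rfl, h⟩ | ⟨m, hu, hv⟩) h'
    · rcases h' with ⟨_, x'', ⟨⟩, rfl, h'⟩ | ⟨_, _, ⟨⟩, -, -⟩ | ⟨m', hv', hw⟩
      · exact .inl ⟨x, x'', rfl, rfl, a.trans' h h'⟩
      · exact .inr (.inr ⟨m', touch_inl_of_rel h hv', hw⟩)
    · rcases h' with ⟨_, _, ⟨⟩, -, -⟩ | ⟨_, y'', ⟨⟩, rfl, h'⟩ | ⟨m', hv', hw⟩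
      · exact .inr (.inl ⟨y, y'', rfl, rfl, b.trans' h h'⟩)
      · exact .inr (.inr ⟨m', touch_inr_of_rel h hv', hw⟩)
    · rcases h' with ⟨x, x', rfl, rfl, h'⟩ | ⟨y, y', rfl, rfl, h'⟩ | ⟨m', hv', hw⟩
      · exact .inr (.inr ⟨m, hu, touch_inl_of_rel (a.symm' h') hv⟩)
      · exact .inr (.inr ⟨m, hu, touch_inr_of_rel (b.symm' h') hv⟩)
      · exact .inr (.inr ⟨m', hu.midRel_trans (hv.midRel hv'), hw⟩)

lemma joinRel_le_prodRel {u v : W3 n} (h : joinRel a b u v) : prodRel a b u v := by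
  rcases h with ⟨p, q, h, rfl, rfl⟩ | ⟨p, q, h, rfl, rfl⟩ <;>
    rcases p with x | m <;> rcases q with x' | m'
  · exact .inl ⟨x, x', rfl, rfl, h⟩
  · exact .inr (.inr ⟨m', ⟨m', h, midRel_refl m'⟩, midRel_refl m'⟩)
  · exact .inr (.inr ⟨m, midRel_refl m, ⟨m, a.symm' h, midRel_refl m⟩⟩)
  · exact .inr (.inr ⟨m', midRel_of_coker h, midRel_refl m'⟩)
  · exact .inr (.inr ⟨x', midRel_of_ker h, midRel_refl x'⟩)
  · exact .inr (.inr ⟨x, midRel_refl x, ⟨x, h, midRel_refl x⟩⟩)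
  · exact .inr (.inr ⟨x', ⟨x', b.symm' h, midRel_refl x'⟩, midRel_refl x'⟩)
  · exact .inr (.inl ⟨m, m', rfl, rfl, h⟩)

lemma eqvGen_joinRel_of_midRel (h : midRel a b m m') :
    Relation.EqvGen (joinRel a b) (.inr (.inl m)) (.inr (.inl m')) :=
  rel_of_midRel
    (s := Setoid.comap (fun m => (.inr (.inl m) : W3 n)) (Relation.EqvGen.setoid (joinRel a b)))
    (fun m m' h => Relation.EqvGen.rel _ _ (.inl ⟨.inr m, .inr m', h, rfl, rfl⟩))
    (fun m m' h => Relation.EqvGen.rel _ _ (.inr ⟨.inl m, .inl m', h, rfl, rfl⟩)) h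

lemma eqvGen_joinRel_of_touch {u : W3 n} (h : touch a b u m) :
    Relation.EqvGen (joinRel a b) u (.inr (.inl m)) := by
  rcases u with x | m₀ | y
  · obtain ⟨m₀, h₀, h₁⟩ := h
    exact .trans _ _ _ (.rel _ _ (.inl ⟨.inl x, .inr m₀, h₀, rfl, rfl⟩))
      (eqvGen_joinRel_of_midRel h₁)
  · exact eqvGen_joinRel_of_midRel h
  · obtain ⟨m₀, h₀, h₁⟩ := h
    exact .trans _ _ _ (.symm _ _ (.rel _ _ (.inr ⟨.inl m₀, .inr y, h₀, rfl, rfl⟩)))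
      (eqvGen_joinRel_of_midRel h₁)

lemma eqvGen_joinRel_iff_prodRel {u v : W3 n} :
    Relation.EqvGen (joinRel a b) u v ↔ prodRel a b u v := by
  refine ⟨fun h => Setoid.eqvGen_le (s := ⟨_, prodRel_equivalence⟩)
    (fun _ _ => joinRel_le_prodRel) h, ?_⟩
  rintro (⟨x, x', rfl, rfl, h⟩ | ⟨y, y', rfl, rfl, h⟩ | ⟨m, hu, hv⟩)
  · exact .rel _ _ (.inl ⟨.inl x, .inl x', h, rfl, rfl⟩)
  · exact .rel _ _ (.inr ⟨.inr y, .inr y', h, rfl, rfl⟩)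
  · exact .trans _ _ _ (eqvGen_joinRel_of_touch hu) (.symm _ _ (eqvGen_joinRel_of_touch hv))

lemma pmul_inl_inl_iff {x x' : Fin n} :
    (pmul a b).r (.inl x) (.inl x') ↔ a.r (.inl x) (.inl x') ∨
      ∃ m m', a.r (.inl x) (.inr m) ∧ midRel a b m m' ∧ a.r (.inl x') (.inr m') := by
  refine eqvGen_joinRel_iff_prodRel.trans ⟨?_, ?_⟩
  · rintro (⟨_, _, ⟨⟩, ⟨⟩, h⟩ | ⟨_, _, ⟨⟩, -, -⟩ | ⟨m, ⟨m₀, h₀, h₁⟩, ⟨m₁, h₂, h₃⟩⟩)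
    · exact .inl h
    · exact .inr ⟨m₀, m₁, h₀, h₁.trans h₃.symm, h₂⟩
  · rintro (h | ⟨m, m', h, hm, h'⟩)
    · exact .inl ⟨x, x', rfl, rfl, h⟩
    · exact .inr (.inr ⟨m', ⟨m, h, hm⟩, ⟨m', h', midRel_refl m'⟩⟩)

lemma pmul_inl_inr_iff {x y : Fin n} :
    (pmul a b).r (.inl x) (.inr y) ↔
      ∃ m m', a.r (.inl x) (.inr m) ∧ midRel a b m m' ∧ b.r (.inl m') (.inr y) := by
  refine eqvGen_joinRel_iff_prodRel.trans ⟨?_, ?_⟩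
  · rintro (⟨_, _, -, ⟨⟩, -⟩ | ⟨_, _, ⟨⟩, -, -⟩ | ⟨m, ⟨m₀, h₀, h₁⟩, ⟨m₁, h₂, h₃⟩⟩)
    exact ⟨m₀, m₁, h₀, h₁.trans h₃.symm, h₂⟩
  · rintro ⟨m, m', h, hm, h'⟩
    exact .inr (.inr ⟨m', ⟨m, h, hm⟩, ⟨m', h', midRel_refl m'⟩⟩)

lemma pmul_inr_inr_iff {y y' : Fin n} :
    (pmul a b).r (.inr y) (.inr y') ↔ b.r (.inr y) (.inr y') ∨
      ∃ m m', b.r (.inl m) (.inr y) ∧ midRel a b m m' ∧ b.r (.inl m') (.inr y') := by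
  refine eqvGen_joinRel_iff_prodRel.trans ⟨?_, ?_⟩
  · rintro (⟨_, _, ⟨⟩, -, -⟩ | ⟨_, _, ⟨⟩, ⟨⟩, h⟩ | ⟨m, ⟨m₀, h₀, h₁⟩, ⟨m₁, h₂, h₃⟩⟩)
    · exact .inl h
    · exact .inr ⟨m₀, m₁, h₀, h₁.trans h₃.symm, h₂⟩
  · rintro (h | ⟨m, m', h, hm, h'⟩)
    · exact .inr (.inl ⟨y, y', rfl, rfl, h⟩)
    · exact .inr (.inr ⟨m', ⟨m, h, hm⟩, ⟨m', h', midRel_refl m'⟩⟩)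

lemma cokerP_le_cokerP_pmul {y y' : Fin n} (h : (cokerP b).r y y') :
    (cokerP (pmul a b)).r y y' :=
  pmul_inr_inr_iff.mpr (.inl h)

lemma cokerP_pmul_of_midRel {y y' : Fin n} (h : b.r (.inl m) (.inr y)) (hm : midRel a b m m')
    (h' : b.r (.inl m') (.inr y')) : (cokerP (pmul a b)).r y y' :=
  pmul_inr_inr_iff.mpr (.inr ⟨m, m', h, hm, h'⟩)

end Product

section EqvGen

variable {α β γ : Type*}

lemma eqvGen_comp_of_eqvGen (f : β → γ) {Q : β → β → Prop} {R : γ → γ → Prop}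
    (h : ∀ u v, Q u v → Relation.EqvGen R (f u) (f v)) {u v : β}
    (huv : Relation.EqvGen Q u v) : Relation.EqvGen R (f u) (f v) :=
  Setoid.eqvGen_le (s := Setoid.comap f (Relation.EqvGen.setoid R)) h huv

lemma eqvGen_map_cases {f : β → γ} (hf : Function.Injective f) {Q : β → β → Prop} {x y : γ}
    (h : Relation.EqvGen (Relation.Map Q f f) x y) :
    x = y ∨ ∃ u v, f u = x ∧ f v = y ∧ Relation.EqvGen Q u v := by
  let E : Setoid γ :=
    { r := fun x y => x = y ∨ ∃ u v, f u = x ∧ f v = y ∧ Relation.EqvGen Q u v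
      iseqv := by
        refine ⟨fun _ => .inl rfl, ?_, ?_⟩
        · rintro x y (rfl | ⟨u, v, rfl, rfl, h⟩)
          exacts [.inl rfl, .inr ⟨v, u, rfl, rfl, h.symm⟩]
        · rintro x y z (rfl | ⟨u, v, rfl, rfl, h⟩) (h' | ⟨u', v', hu', rfl, h'⟩)
          · exact .inl h'
          · exact .inr ⟨u', v', hu', rfl, h'⟩
          · exact h' ▸ .inr ⟨u, v, rfl, rfl, h⟩
          · exact .inr ⟨u, v', rfl, rfl, h.trans _ _ _ (hf hu' ▸ h')⟩ }
  exact Setoid.eqvGen_le (s := E) (fun _ _ ⟨u, v, h, hu, hv⟩ => .inr ⟨u, v, hu, hv, .rel _ _ h⟩) h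

/-- All `S`-edges lie in the range of `f`, so a path between points of that range alternates
`R`-paths with `S`-edges, and the `R`-paths can be contracted to relations on `β`. -/
lemma eqvGen_sup_map_iff (f : β → γ) (R : γ → γ → Prop) (S : β → β → Prop) {u v : β} :
    Relation.EqvGen (R ⊔ Relation.Map S f f) (f u) (f v) ↔
      Relation.EqvGen ((fun u v => Relation.EqvGen R (f u) (f v)) ⊔ S) u v := by
  set Q := Relation.EqvGen ((fun u v => Relation.EqvGen R (f u) (f v)) ⊔ S)
  refine ⟨fun h => ?_, eqvGen_comp_of_eqvGen f fun u v h => h.elim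
    (Relation.EqvGen.mono le_sup_left _ _) fun h => .rel _ _ (.inr ⟨u, v, h, rfl, rfl⟩)⟩
  let E : Setoid γ :=
    { r := fun x y => Relation.EqvGen R x y ∨
        ∃ u v, Relation.EqvGen R x (f u) ∧ Q u v ∧ Relation.EqvGen R (f v) y
      iseqv := by
        refine ⟨fun x => .inl (.refl x), ?_, ?_⟩
        · rintro x y (h | ⟨u, v, h₁, h₂, h₃⟩)
          exacts [.inl h.symm, .inr ⟨v, u, h₃.symm, h₂.symm, h₁.symm⟩]
        · rintro x y z (h | ⟨u, v, h₁, h₂, h₃⟩) (h' | ⟨u', v', h₁', h₂', h₃'⟩)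
          · exact .inl (h.trans _ _ _ h')
          · exact .inr ⟨u', v', h.trans _ _ _ h₁', h₂', h₃'⟩
          · exact .inr ⟨u, v, h₁, h₂, h₃.trans _ _ _ h'⟩
          · exact .inr ⟨u, v', h₁, h₂.trans _ _ _ ((Relation.EqvGen.rel _ _
              (.inl (h₃.trans _ _ _ h₁'))).trans _ _ _ h₂'), h₃'⟩ }
  rcases Setoid.eqvGen_le (s := E) (fun x y h => h.elim (fun h => .inl (.rel _ _ h))
    fun ⟨u, v, h, hu, hv⟩ => .inr ⟨u, v, hu ▸ .refl _, .rel _ _ (.inr h), hv ▸ .refl _⟩) h with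
    h | ⟨u', v', h₁, h₂, h₃⟩
  · exact .rel _ _ (.inl h)
  · exact (Relation.EqvGen.rel _ _ (.inl h₁)).trans _ _ _
      (h₂.trans _ _ _ (.rel _ _ (.inl h₃)))

/-- In the application `J` is the product graph of two partitions with outer rows `o`, the map `h`
places their product in the product graph with a third partition, and `g`, `f` embed both graphs
in the four-row graph. -/
lemma eqvGen_map_comap_sup_iff {o h : α → β} {g f : β → γ} (hg : Function.Injective g)
    (hf : Function.Injective f) (hgo : g ∘ o = f ∘ h)
    (hgf : ∀ z w, g z = f w → ∃ p, z = o p ∧ w = h p) (J S : β → β → Prop) {w w' : β} :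
    Relation.EqvGen (Relation.Map (fun p q => Relation.EqvGen J (o p) (o q)) h h ⊔ S) w w' ↔
      Relation.EqvGen (Relation.Map J g g ⊔ Relation.Map S f f) (f w) (f w') := by
  rw [eqvGen_sup_map_iff]
  constructor <;> refine fun hw => Setoid.eqvGen_le (s := Relation.EqvGen.setoid _) ?_ hw
  · rintro _ _ (⟨p, q, hpq, rfl, rfl⟩ | h)
    · refine .rel _ _ (.inl ?_)
      have := eqvGen_comp_of_eqvGen g (R := Relation.Map J g g)
        (fun u v h => .rel _ _ ⟨u, v, h, rfl, rfl⟩) hpq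
      rwa [← Function.comp_apply (f := g), ← Function.comp_apply (f := g) (x := q), hgo] at this
    · exact .rel _ _ (.inr h)
  · rintro u v (huv | huv)
    · rcases eqvGen_map_cases hg huv with huv | ⟨z, z', hz, hz', hzz'⟩
      · exact hf huv ▸ .refl u
      obtain ⟨p, rfl, rfl⟩ := hgf z u hz
      obtain ⟨q, rfl, rfl⟩ := hgf z' v hz'
      exact .rel _ _ (.inl ⟨p, q, hzz', rfl, rfl⟩)
    · exact .rel _ _ (.inr huv)

lemma relationMap_sup (r s : α → α → Prop) (f : α → β) :
    Relation.Map (r ⊔ s) f f = Relation.Map r f f ⊔ Relation.Map s f f := by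
  ext x y
  constructor
  · rintro ⟨p, q, h | h, rfl, rfl⟩
    exacts [.inl ⟨p, q, h, rfl, rfl⟩, .inr ⟨p, q, h, rfl, rfl⟩]
  · rintro (⟨p, q, h, rfl, rfl⟩ | ⟨p, q, h, rfl, rfl⟩)
    exacts [⟨p, q, .inl h, rfl, rfl⟩, ⟨p, q, .inr h, rfl, rfl⟩]

lemma exists_step_across_of_eqvGen [LinearOrder α] {R : α → α → Prop} (hR : ∀ x y, R x y → R y x)
    {u v t : α} (h : Relation.EqvGen R u v) (hu : u < t) (hv : t < v) :
    Relation.EqvGen R u t ∨ ∃ g g', R g g' ∧ g < t ∧ t < g' ∧ Relation.EqvGen R u g := by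
  have : Std.Symm R := ⟨hR⟩
  rw [Relation.EqvGen.eqvGen_eq_reflTransGen] at h ⊢
  induction h using Relation.ReflTransGen.head_induction_on with
  | refl => exact absurd (hu.trans hv) (lt_irrefl _)
  | @head u c huc _ ih =>
    rcases lt_trichotomy c t with hct | rfl | hct
    · exact (ih hct).imp (.head huc) fun ⟨g, g', hg, h₁, h₂, hug⟩ =>
        ⟨g, g', hg, h₁, h₂, .head huc hug⟩
    · exact .inl (.single huc)
    · exact .inr ⟨u, c, huc, hu, hct, .refl⟩

end EqvGen

section Associativity

variable {n : ℕ}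

/-- Four-row vertex set, for the product graph of three partitions. -/
abbrev W4 (n : ℕ) := Fin n ⊕ (Fin n ⊕ (Fin n ⊕ Fin n))

def rows012 : W3 n → W4 n := Sum.elim .inl (Sum.elim (.inr ∘ .inl) (.inr ∘ .inr ∘ .inl))

def rows023 : W3 n → W4 n := Sum.elim .inl (Sum.elim (.inr ∘ .inr ∘ .inl) (.inr ∘ .inr ∘ .inr))

def rows013 : W3 n → W4 n := Sum.elim .inl (Sum.elim (.inr ∘ .inl) (.inr ∘ .inr ∘ .inr))

def rows123 : W3 n → W4 n :=
  Sum.elim (.inr ∘ .inl) (Sum.elim (.inr ∘ .inr ∘ .inl) (.inr ∘ .inr ∘ .inr))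

lemma rows012_injective : Function.Injective (rows012 (n := n)) := by
  rintro (_ | _ | _) (_ | _ | _) h <;> simp_all [rows012]

lemma rows023_injective : Function.Injective (rows023 (n := n)) := by
  rintro (_ | _ | _) (_ | _ | _) h <;> simp_all [rows023]

lemma rows013_injective : Function.Injective (rows013 (n := n)) := by
  rintro (_ | _ | _) (_ | _ | _) h <;> simp_all [rows013]

lemma rows123_injective : Function.Injective (rows123 (n := n)) := by
  rintro (_ | _ | _) (_ | _ | _) h <;> simp_all [rows123]

lemma joinRel_eq (a b : Ptn n) :
    joinRel a b = Relation.Map a.r upMid upMid ⊔ Relation.Map b.r midLow midLow := rfl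

lemma exists_of_rows012_eq_rows023 (z w : W3 n) (h : rows012 z = rows023 w) :
    ∃ p, z = outer p ∧ w = upMid p := by
  rcases z with x | m | y <;> rcases w with x' | m' | y' <;>
    simp [rows012, rows023] at h
  · exact ⟨.inl x, by simp [h, outer, upMid]⟩
  · exact ⟨.inr y, by simp [h, outer, upMid]⟩

lemma exists_of_rows123_eq_rows013 (z w : W3 n) (h : rows123 z = rows013 w) :
    ∃ p, z = outer p ∧ w = midLow p := by
  rcases z with x | m | y <;> rcases w with x' | m' | y' <;>
    simp [rows123, rows013] at h
  · exact ⟨.inl x, by simp [h, outer, midLow]⟩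
  · exact ⟨.inr y, by simp [h, outer, midLow]⟩

theorem pmul_assoc (a b c : Ptn n) : pmul (pmul a b) c = pmul a (pmul b c) := by
  ext u v
  have hL := eqvGen_map_comap_sup_iff rows012_injective rows023_injective
    (funext fun p => by rcases p <;> rfl) exists_of_rows012_eq_rows023 (joinRel a b)
    (Relation.Map c.r midLow midLow) (w := outer u) (w' := outer v)
  have hR := eqvGen_map_comap_sup_iff rows123_injective rows013_injective
    (funext fun p => by rcases p <;> rfl) exists_of_rows123_eq_rows013 (joinRel b c)
    (Relation.Map a.r upMid upMid) (w := outer u) (w' := outer v)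
  rw [sup_comm] at hR
  have hrows : ∀ p : V n, rows023 (outer p) = rows013 (outer p) := fun p => by rcases p <;> rfl
  -- both are the four-row graph with the edges of `a`, `b`, `c` between consecutive rows
  have hrel : Relation.Map (joinRel a b) rows012 rows012 ⊔
      Relation.Map (Relation.Map c.r midLow midLow) rows023 rows023 =
      Relation.Map (joinRel b c) rows123 rows123 ⊔
      Relation.Map (Relation.Map a.r upMid upMid) rows013 rows013 := by
    simp only [joinRel_eq, relationMap_sup, Relation.map_map]
    rw [show rows012 ∘ upMid = rows013 ∘ upMid from funext fun p => by rcases p <;> rfl,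
      show rows012 ∘ midLow = rows123 ∘ upMid from funext fun p => by rcases p <;> rfl,
      show rows023 ∘ midLow = rows123 ∘ midLow from funext fun p => by rcases p <;> rfl]
    ac_rfl
  refine hL.trans (Iff.trans ?_ hR.symm)
  rw [hrows, hrows, hrel]

end Associativity

section DEta

variable {n : ℕ} [NeZero n] {ε : Setoid (Fin n)}

lemma dEta_inl_inl_iff {x x' : Fin n} :
    (dEta ε).r (.inl x) (.inl x') ↔ anchorBelow ε x = anchorBelow ε x' := Iff.rfl

lemma dEta_inl_inr_iff {x y : Fin n} :
    (dEta ε).r (.inl x) (.inr y) ↔ anchorBelow ε x = minCl ε y := Iff.rfl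

lemma dEta_inr_inr_iff {y y' : Fin n} : (dEta ε).r (.inr y) (.inr y') ↔ ε.r y y' :=
  minCl_eq_minCl_iff ε

lemma cokerP_dEta : cokerP (dEta ε) = ε := Setoid.ext fun _ _ => dEta_inr_inr_iff

lemma fullDom_dEta : FullDom (dEta ε) := fun x => ⟨anchorBelow ε x, (minCl_anchorBelow x).symm⟩

lemma rhoP_dEta : rhoP (dEta ε) = dEta ε := by rw [rhoP, cokerP_dEta]

lemma IsPlanarEq.planar_dEta (hε : IsPlanarEq ε) : Planar (dEta ε) := by
  intro p q r s hpq hqr hrs hpr hqs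
  rcases p with x₁ | y₁ <;> rcases q with x₂ | y₂ <;> rcases r with x₃ | y₃ <;>
    rcases s with x₄ | y₄ <;>
    simp only [ordV_inl_lt_inl_iff, ordV_inr_lt_inr_iff, ordV_inl_lt_inr, not_ordV_inr_lt_inl,
      dEta_inl_inl_iff, dEta_inl_inr_iff, dEta_inr_inr_iff] at hpq hqr hrs hpr hqs ⊢
  -- the rows of `p, q, r, s` are now upper-upper-upper-*, upper-upper-lower-lower,
  -- upper-lower-lower-lower and lower-lower-lower-lower
  · exact le_antisymm (anchorBelow_mono hpq.le) (hpr ▸ anchorBelow_mono hqr.le)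
  · exact le_antisymm (anchorBelow_mono hpq.le) (hpr ▸ anchorBelow_mono hqr.le)
  · refine (anchorBelow_mono hpq.le).eq_or_lt.resolve_right fun hlt => hlt.ne ?_
    rw [hpr, hqs] at hlt ⊢
    have hy₄ := unnested_of_minCl_mem_anchorsF (hqs ▸ anchorBelow_mem_anchorsF ε x₂)
    have h := hε.rel_of_lt_of_lt hy₄ (ε.symm' (minCl_rel ε y₃))
      (hlt.trans_le (minCl_le_self ε y₄)) hrs
    exact (minCl_minCl ε y₃).symm.trans (minCl_eq_of_rel ε h)
  · have hy₃ := unnested_of_minCl_mem_anchorsF (hpr ▸ anchorBelow_mem_anchorsF ε x₁)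
    rw [hpr]
    exact minCl_eq_of_rel ε
      (ε.symm' (ε.trans' hqs (hε.rel_of_lt_of_lt hy₃ (ε.symm' hqs) hrs hqr)))
  · exact ε.symm' (hε.nonCrossing _ _ _ _ hrs hqr hpq (ε.symm' hqs) (ε.symm' hpr))

end DEta

section MulDEta

variable {n : ℕ}

lemma midRel_congr_left {a a' b : Ptn n} (h : cokerP a = cokerP a') :
    midRel a b = midRel a' b := by
  change Relation.EqvGen (fun m m' => (cokerP a).r m m' ∨ _) = Relation.EqvGen fun m m' => _
  rw [h]
  rfl

lemma cokerP_pmul_congr_left {a a' b : Ptn n} (h : cokerP a = cokerP a') :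
    cokerP (pmul a b) = cokerP (pmul a' b) := by
  ext y y'
  change (pmul a b).r (.inr y) (.inr y') ↔ (pmul a' b).r (.inr y) (.inr y')
  rw [pmul_inr_inr_iff, pmul_inr_inr_iff, midRel_congr_left h]

variable [NeZero n] {ε ψ : Setoid (Fin n)} {b c : Ptn n}

lemma dEta_pmul_inl_inl_iff {x x' : Fin n} :
    (pmul (dEta ε) b).r (.inl x) (.inl x') ↔
      midRel (dEta ε) b (anchorBelow ε x) (anchorBelow ε x') := by
  rw [pmul_inl_inl_iff]
  refine ⟨?_, fun h => .inr ⟨_, _, (minCl_anchorBelow x).symm, h, (minCl_anchorBelow x').symm⟩⟩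
  rintro (h | ⟨m, m', h, hm, h'⟩)
  · rw [dEta_inl_inl_iff.mp h]
    exact midRel_refl _
  · refine (midRel_of_coker ?_).trans (hm.trans (midRel_of_coker ?_))
    · exact (minCl_anchorBelow x).trans h
    · exact ((minCl_anchorBelow x').trans h').symm

lemma dEta_pmul_inl_inr_iff {x y : Fin n} :
    (pmul (dEta ε) b).r (.inl x) (.inr y) ↔
      ∃ m, midRel (dEta ε) b (anchorBelow ε x) m ∧ b.r (.inl m) (.inr y) := by
  rw [pmul_inl_inr_iff]
  refine ⟨fun ⟨m, m', h, hm, h'⟩ => ⟨m', ?_, h'⟩,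
    fun ⟨m, hm, h⟩ => ⟨_, m, (minCl_anchorBelow x).symm, hm, h⟩⟩
  exact (midRel_of_coker ((minCl_anchorBelow x).trans h)).trans hm

variable (hψ : IsPlanarEq ψ) (hc : ∀ y y', (cokerP c).r y y' → ψ.r y y')
include hψ hc

lemma midRel_dEta_iff {m m' : Fin n} :
    midRel c (dEta ψ) m m' ↔ anchorBelow ψ m = anchorBelow ψ m' :=
  ⟨rel_of_midRel (s := Setoid.ker (anchorBelow ψ))
    (fun _ _ h => hψ.anchorBelow_eq_of_rel (hc _ _ h)) fun _ _ h => h, fun h => midRel_of_ker h⟩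

lemma pmul_dEta_inl_inl_iff {x x' : Fin n} :
    (pmul c (dEta ψ)).r (.inl x) (.inl x') ↔ c.r (.inl x) (.inl x') ∨
      ∃ m m', c.r (.inl x) (.inr m) ∧ c.r (.inl x') (.inr m') ∧
        anchorBelow ψ m = anchorBelow ψ m' := by
  simp only [pmul_inl_inl_iff, midRel_dEta_iff hψ hc]
  exact or_congr_right ⟨fun ⟨m, m', h, hm, h'⟩ => ⟨m, m', h, h', hm⟩,
    fun ⟨m, m', h, h', hm⟩ => ⟨m, m', h, hm, h'⟩⟩

lemma pmul_dEta_inl_inr_iff {x y : Fin n} :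
    (pmul c (dEta ψ)).r (.inl x) (.inr y) ↔
      ∃ m, c.r (.inl x) (.inr m) ∧ anchorBelow ψ m = minCl ψ y := by
  rw [pmul_inl_inr_iff]
  exact ⟨fun ⟨m, _, h, hm, h'⟩ => ⟨m, h, ((midRel_dEta_iff hψ hc).mp hm).trans h'⟩,
    fun ⟨m, h, hm⟩ => ⟨m, m, h, midRel_refl m, hm⟩⟩

lemma cokerP_pmul_dEta : cokerP (pmul c (dEta ψ)) = ψ := by
  ext y y'
  change (pmul c (dEta ψ)).r (.inr y) (.inr y') ↔ _
  rw [pmul_inr_inr_iff, dEta_inr_inr_iff]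
  refine ⟨?_, .inl⟩
  rintro (h | ⟨m, m', h, hm, h'⟩)
  · exact h
  · exact (minCl_eq_minCl_iff ψ).mp
      (h.symm.trans (((midRel_dEta_iff hψ hc).mp hm).trans h'))

end MulDEta

section RangeIdentities

variable {n : ℕ} [NeZero n] {a : Ptn n}

lemma Planar.anchorBelow_cokerP_of_rel (ha : Planar a) {x m : Fin n}
    (h : a.r (.inl x) (.inr m)) : anchorBelow (cokerP a) m = minCl (cokerP a) m :=
  ha.isPlanarEq_cokerP.anchorBelow_eq_minCl (ha.unnested_cokerP h)

theorem Planar.pmul_rhoP (ha : Planar a) : pmul a (rhoP a) = a := by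
  have hψ := ha.isPlanarEq_cokerP
  have hc : ∀ y y', (cokerP a).r y y' → (cokerP a).r y y' := fun _ _ => id
  refine ptn_ext (fun x x' => ?_) (fun x y => ?_) (cokerP_pmul_dEta hψ hc)
  · refine (pmul_dEta_inl_inl_iff hψ hc).trans ⟨?_, .inl⟩
    rintro (h | ⟨m, m', h, h', hm⟩)
    · exact h
    rw [ha.anchorBelow_cokerP_of_rel h, ha.anchorBelow_cokerP_of_rel h',
      minCl_eq_minCl_iff] at hm
    exact a.trans' h (a.trans' hm (a.symm' h'))
  · refine (pmul_dEta_inl_inr_iff hψ hc).trans ⟨?_, fun h => ⟨y, h, ha.anchorBelow_cokerP_of_rel h⟩⟩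
    rintro ⟨m, h, hm⟩
    rw [ha.anchorBelow_cokerP_of_rel h, minCl_eq_minCl_iff] at hm
    exact a.trans' h hm

theorem rhoP_rhoP (a : Ptn n) : rhoP (rhoP a) = rhoP a := rhoP_dEta

theorem Planar.rhoP_pmul_self (ha : Planar a) : pmul (rhoP a) (rhoP a) = rhoP a := by
  have h := ha.isPlanarEq_cokerP.planar_dEta.pmul_rhoP
  rwa [rhoP_dEta] at h

theorem rhoP_pmul_eq_rhoP_rhoP_pmul (a b : Ptn n) : rhoP (pmul a b) = rhoP (pmul (rhoP a) b) :=
  congrArg dEta (cokerP_pmul_congr_left cokerP_dEta.symm)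

end RangeIdentities

section CokerPmul

variable {n : ℕ} {a b : Ptn n}

lemma Planar.cokerP_pmul_cases (hb : Planar b) {y y' : Fin n}
    (h : (cokerP (pmul a b)).r y y') :
    (cokerP b).r y y' ∨ Unnested (cokerP b) y ∧ Unnested (cokerP b) y' := by
  rcases pmul_inr_inr_iff.mp h with h | ⟨m, m', h, -, h'⟩
  · exact .inl h
  · exact .inr ⟨hb.unnested_cokerP h, hb.unnested_cokerP h'⟩

lemma Planar.unnested_cokerP_of_unnested_cokerP_pmul (hb : Planar b) {y : Fin n}
    (hy : Unnested (cokerP (pmul a b)) y) : Unnested (cokerP b) y := by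
  set ζ := cokerP b
  by_contra hζ
  obtain ⟨z, -, b₁, hb₁, b₂, hb₂, hlt, hgap, hin⟩ := exists_unnested_nestedBy hζ
  have hb₁₂ : ζ.r b₁ b₂ := ζ.trans' (ζ.symm' hb₁) hb₂
  refine hy b₁ ⟨b₁, (cokerP (pmul a b)).refl' b₁, b₂, cokerP_le_cokerP_pmul hb₁₂, hlt,
    fun u hu hbtw => ?_, fun u hu => ?_⟩
  · rcases hb.cokerP_pmul_cases hu with h | ⟨-, hu'⟩
    · exact hgap u (ζ.trans' hb₁ h) hbtw
    · exact hgap u (ζ.trans' hb₁ (hb.isPlanarEq_cokerP.rel_of_lt_of_lt hu' hb₁₂ hbtw.1 hbtw.2))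
        hbtw
  · rcases hb.cokerP_pmul_cases hu with h | ⟨h, -⟩
    · exact hin u h
    · exact absurd h hζ

lemma Planar.anchorsF_cokerP_pmul_subset (hb : Planar b) :
    anchorsF (cokerP (pmul a b)) ⊆ anchorsF (cokerP b) := by
  intro c hc
  have hle := minCl_le _ (cokerP_le_cokerP_pmul (a := a) (minCl_rel (cokerP b) c))
  rw [minCl_of_mem_anchorsF hc] at hle
  exact Finset.mem_filter.mpr ⟨Finset.mem_univ c,
    hb.unnested_cokerP_of_unnested_cokerP_pmul (unnested_of_mem_anchorsF hc),
    le_antisymm (minCl_le_self _ c) hle⟩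

variable [NeZero n]

lemma Planar.cokerP_pmul_anchorBelow_of_midRel (hb : Planar b) {m m' : Fin n}
    (h : midRel (dEta (cokerP (pmul a b))) (dEta (cokerP b)) m m') :
    (cokerP (pmul a b)).r (anchorBelow (cokerP b) m) (anchorBelow (cokerP b) m') := by
  set ζ := cokerP b
  set φ := cokerP (pmul a b)
  have hζ := hb.isPlanarEq_cokerP
  refine rel_of_midRel (s := Setoid.comap (anchorBelow ζ) φ) (fun p q hpq => ?_)
    (fun p q hpq => by rw [Setoid.comap_rel, dEta_inl_inl_iff.mp hpq]) h
  rw [dEta_inr_inr_iff] at hpq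
  rw [Setoid.comap_rel]
  rcases hb.cokerP_pmul_cases hpq with hz | ⟨hp, hq⟩
  · rw [hζ.anchorBelow_eq_of_rel hz]
  · rw [hζ.anchorBelow_eq_minCl hp, hζ.anchorBelow_eq_minCl hq]
    exact φ.trans' (φ.symm' (cokerP_le_cokerP_pmul (minCl_rel ζ p)))
      (φ.trans' hpq (cokerP_le_cokerP_pmul (minCl_rel ζ q)))

lemma Planar.cokerP_dEta_pmul_dEta (hb : Planar b) :
    cokerP (pmul (dEta (cokerP (pmul a b))) (dEta (cokerP b))) = cokerP (pmul a b) := by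
  set ζ := cokerP b
  set φ := cokerP (pmul a b)
  have hζ : IsPlanarEq ζ := hb.isPlanarEq_cokerP
  ext y y'
  change (pmul (dEta φ) (dEta ζ)).r (.inr y) (.inr y') ↔ φ.r y y'
  rw [pmul_inr_inr_iff, dEta_inr_inr_iff]
  constructor
  · rintro (h | ⟨m, m', h, hm, h'⟩)
    · exact cokerP_le_cokerP_pmul h
    · have := hb.cokerP_pmul_anchorBelow_of_midRel hm
      rw [dEta_inl_inr_iff.mp h, dEta_inl_inr_iff.mp h'] at this
      exact φ.trans' (cokerP_le_cokerP_pmul (minCl_rel ζ y))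
        (φ.trans' this (cokerP_le_cokerP_pmul (ζ.symm' (minCl_rel ζ y'))))
  · intro h
    rcases hb.cokerP_pmul_cases h with hz | ⟨hy, hy'⟩
    · exact .inl hz
    · exact .inr ⟨y, y', hζ.anchorBelow_eq_minCl hy, midRel_of_coker (dEta_inr_inr_iff.mpr h),
        hζ.anchorBelow_eq_minCl hy'⟩

theorem Planar.rhoP_pmul_pmul_rhoP (hb : Planar b) :
    pmul (rhoP (pmul a b)) (rhoP b) = rhoP (pmul a b) := by
  set ζ := cokerP b
  set φ := cokerP (pmul a b)
  have hζ : IsPlanarEq ζ := hb.isPlanarEq_cokerP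
  have hanchor : ∀ x, anchorBelow ζ (anchorBelow φ x) = anchorBelow φ x := fun x =>
    anchorBelow_of_mem_anchorsF (hb.anchorsF_cokerP_pmul_subset (anchorBelow_mem_anchorsF φ x))
  change pmul (dEta φ) (dEta ζ) = dEta φ
  refine ptn_ext (fun x x' => ?_) (fun x y => ?_)
    (hb.cokerP_dEta_pmul_dEta.trans cokerP_dEta.symm)
  · rw [dEta_pmul_inl_inl_iff, dEta_inl_inl_iff]
    refine ⟨fun h => ?_, fun h => h ▸ midRel_refl _⟩
    have := hb.cokerP_pmul_anchorBelow_of_midRel h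
    rwa [hanchor, hanchor, ← minCl_eq_minCl_iff, minCl_anchorBelow, minCl_anchorBelow] at this
  · rw [dEta_pmul_inl_inr_iff, dEta_inl_inr_iff, anchorBelow_eq_minCl_iff]
    constructor
    · rintro ⟨m, hm, h⟩
      have := hb.cokerP_pmul_anchorBelow_of_midRel hm
      rw [hanchor, dEta_inl_inr_iff.mp h] at this
      exact φ.trans' this (cokerP_le_cokerP_pmul (ζ.symm' (minCl_rel ζ y)))
    · intro h
      have hy : Unnested φ y := (unnested_of_mem_anchorsF (anchorBelow_mem_anchorsF φ x)).of_rel h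
      exact ⟨y, midRel_of_coker (dEta_inr_inr_iff.mpr h),
        hζ.anchorBelow_eq_minCl (hb.unnested_cokerP_of_unnested_cokerP_pmul hy)⟩
end CokerPmul

section MidRelNonCrossing

variable {n : ℕ}

def setoidOfSet (I : Set (Fin n)) : Setoid (Fin n) where
  r x y := x = y ∨ x ∈ I ∧ y ∈ I
  iseqv := ⟨fun _ => .inl rfl, fun h => h.elim (fun h => .inl h.symm) fun h => .inr h.symm,
    fun h h' => h.elim (fun h => h ▸ h') fun h => h'.elim (fun h' => h' ▸ .inr h)
      fun h' => .inr ⟨h.1, h'.2⟩⟩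

def mergeSetoid (θ : Setoid (Fin n)) (I : Set (Fin n)) : Setoid (Fin n) where
  r u v := θ.r u v ∨ (∃ t ∈ I, θ.r u t) ∧ ∃ t ∈ I, θ.r v t
  iseqv := by
    refine ⟨fun u => .inl (θ.refl' u), fun h => h.elim (.inl ∘ θ.symm') (.inr ∘ And.symm), ?_⟩
    rintro u v w (h | ⟨hu, t, ht, hv⟩) (h' | ⟨⟨t', ht', hv'⟩, hw⟩)
    · exact .inl (θ.trans' h h')
    · exact .inr ⟨⟨t', ht', θ.trans' h hv'⟩, hw⟩
    · exact .inr ⟨hu, t, ht, θ.trans' (θ.symm' h') hv⟩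
    · exact .inr ⟨hu, hw⟩

variable {θ : Setoid (Fin n)} {I : Set (Fin n)}

lemma sup_setoidOfSet : θ ⊔ setoidOfSet I = mergeSetoid θ I := by
  refine le_antisymm (sup_le (fun _ _ => .inl) ?_) fun u v => ?_
  · rintro x y (rfl | ⟨hx, hy⟩)
    exacts [.inl (θ.refl' x), .inr ⟨⟨x, hx, θ.refl' x⟩, y, hy, θ.refl' y⟩]
  rintro (h | ⟨⟨t, ht, hu⟩, t', ht', hv⟩)
  · exact (le_sup_left : θ ≤ θ ⊔ setoidOfSet I) h
  · have hθ : θ ≤ θ ⊔ setoidOfSet I := le_sup_left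
    have hI : setoidOfSet I ≤ θ ⊔ setoidOfSet I := le_sup_right
    exact Setoid.trans' _ (hθ hu) (Setoid.trans' _ (hI (.inr ⟨ht, ht'⟩)) (hθ (θ.symm' hv)))

lemma NonCrossing.mergeSetoid (hθ : NonCrossing θ) (hI : I.OrdConnected) :
    NonCrossing (mergeSetoid θ I) := by
  intro w x y z hwx hxy hyz h₁ h₂
  have meets : ∀ {p q}, (∃ t ∈ I, θ.r p t) → θ.r p q → ∃ t ∈ I, θ.r q t :=
    fun ⟨t, ht, hp⟩ hpq => ⟨t, ht, θ.trans' (θ.symm' hpq) hp⟩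
  have mem : ∀ {t t' s}, t ∈ I → t' ∈ I → t ≤ s → s ≤ t' → ∃ u ∈ I, θ.r s u :=
    fun ht ht' h h' => ⟨_, hI.out ht ht' ⟨h, h'⟩, θ.refl' _⟩
  rcases h₁ with h₁ | ⟨hw, hy⟩ <;> rcases h₂ with h₂ | ⟨hx, hz⟩
  · exact .inl (hθ w x y z hwx hxy hyz h₁ h₂)
  · refine (?_ : (∃ t ∈ I, θ.r y t) ∨ θ.r y z).elim (fun hy => .inr ⟨hy, hz⟩) .inl
    obtain ⟨tx, htx, hx'⟩ := hx
    obtain ⟨tz, htz, hz'⟩ := hz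
    rcases lt_or_ge y tx with hyt | hty
    · exact .inl ⟨tx, htx, hθ w x y tx hwx hxy hyt h₁ hx'⟩
    rcases le_or_gt y tz with hyt' | hty'
    · exact .inl (mem htx htz hty hyt')
    rcases lt_or_ge w tz with hwt | htw
    · exact .inr (hθ w tz y z hwt hty' hyz h₁ (θ.symm' hz'))
    rcases lt_or_ge tx w with htw' | hwt'
    · exact .inl (meets ⟨tx, htx, hx'⟩ (hθ tx w x y htw' hwx hxy (θ.symm' hx') h₁))
    · exact .inl (meets (mem htz htx htw hwt') h₁)
  · refine (?_ : (∃ t ∈ I, θ.r z t) ∨ θ.r y z).elim (fun hz => .inr ⟨hy, hz⟩) .inl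
    obtain ⟨tw, htw, hw'⟩ := hw
    obtain ⟨ty, hty, hy'⟩ := hy
    rcases lt_or_ge z ty with hzt | htz
    · exact .inl ⟨ty, hty, hθ x y z ty hxy hyz hzt h₂ hy'⟩
    rcases lt_or_ge ty x with htx | hxt
    · exact .inr (hθ ty x y z htx hxy hyz (θ.symm' hy') h₂)
    rcases le_or_gt tw x with htwx | hxtw
    · exact .inl (meets (mem htw hty htwx hxt) h₂)
    rcases le_or_gt tw z with htwz | hztw
    · rcases htwz.lt_or_eq with htwz | rfl
      · exact .inl (meets ⟨tw, htw, θ.refl' tw⟩ (hθ w x tw z hwx hxtw htwz hw' h₂))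
      · exact .inl ⟨tw, htw, θ.refl' tw⟩
    · exact .inl (mem hty htw htz hztw.le)
  · exact .inr ⟨hy, hz⟩

lemma NonCrossing.sup (hθ : NonCrossing θ) {κ : Setoid (Fin n)}
    (hκ : ∀ c, {t | κ.r c t}.OrdConnected) : NonCrossing (θ ⊔ κ) := by
  have hκ_eq : κ = Finset.univ.sup fun c => setoidOfSet {t | κ.r c t} := by
    refine le_antisymm (fun x y h => ?_) (Finset.sup_le fun c _ => ?_)
    · exact (Finset.le_sup (f := fun c => setoidOfSet {t | κ.r c t}) (Finset.mem_univ x))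
        (.inr ⟨κ.refl' x, h⟩)
    · rintro x y (rfl | ⟨hx, hy⟩)
      exacts [κ.refl' x, κ.trans' (κ.symm' hx) hy]
  rw [hκ_eq]
  induction (Finset.univ : Finset (Fin n)) using Finset.induction_on generalizing θ with
  | empty => simpa using hθ
  | insert c s _ ih =>
    rw [Finset.sup_insert, ← sup_assoc, sup_setoidOfSet]
    exact ih (hθ.mergeSetoid (hκ c))

end MidRelNonCrossing

section CokerPmulPlanar

variable {n : ℕ} {a b : Ptn n}

lemma midRel_iff_sup {m m' : Fin n} : midRel a b m m' ↔ (cokerP a ⊔ kerP b).r m m' := by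
  rw [Setoid.sup_eq_eqvGen]
  rfl

lemma Planar.ordConnected_kerP (hb : Planar b) (hfb : FullDom b) (c : Fin n) :
    {t | (kerP b).r c t}.OrdConnected :=
  ⟨fun _ ht _ ht' _ hs => b.trans' ht
    (hb.rel_inl_of_le_of_le hfb (b.trans' (b.symm' ht) ht') hs.1 hs.2)⟩

lemma Planar.midRel_of_lt_of_lt (ha : Planar a) (hb : Planar b) (hfb : FullDom b)
    {w x y z : Fin n} (hwx : w < x) (hxy : x < y) (hyz : y < z) (hwy : midRel a b w y)
    (hxz : midRel a b x z) : midRel a b y z := by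
  rw [midRel_iff_sup] at *
  exact ha.nonCrossing_cokerP.sup (hb.ordConnected_kerP hfb) w x y z hwx hxy hyz hwy hxz

lemma Planar.nonCrossing_cokerP_pmul (ha : Planar a) (hb : Planar b) (hfb : FullDom b) :
    NonCrossing (cokerP (pmul a b)) := by
  set ζ := cokerP b
  set φ := cokerP (pmul a b)
  intro w x y z hwx hxy hyz hwy hxz
  rcases pmul_inr_inr_iff.mp hwy with hwy | ⟨m₁, m₁', hw, hm₁, hy⟩ <;>
    rcases pmul_inr_inr_iff.mp hxz with hxz | ⟨m₂, m₂', hx, hm₂, hz⟩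
  · exact cokerP_le_cokerP_pmul (hb.nonCrossing_cokerP w x y z hwx hxy hyz hwy hxz)
  · have hxy' : ζ.r x y := b.trans' (b.symm' hx) (hb.rel_inl_inr_of_lt_of_lt hx hwy hwx hxy)
    exact φ.trans' (φ.symm' (cokerP_le_cokerP_pmul hxy')) (cokerP_pmul_of_midRel hx hm₂ hz)
  · exact cokerP_le_cokerP_pmul (b.trans' (b.symm' hy) (hb.rel_inl_inr_of_lt_of_lt hy hxz hxy hyz))
  by_cases h₁₂ : b.r (.inl m₁') (.inl m₂')
  · exact cokerP_le_cokerP_pmul (b.trans' (b.symm' hy) (b.trans' h₁₂ hz))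
  by_cases h₂₁ : b.r (.inl m₂) (.inl m₁')
  · exact φ.trans' (φ.symm' (cokerP_le_cokerP_pmul (b.trans' (b.symm' hx) (b.trans' h₂₁ hy))))
      (cokerP_pmul_of_midRel hx hm₂ hz)
  by_cases h₀ : b.r (.inl m₁) (.inl m₂)
  · exact φ.trans' (φ.symm' (cokerP_pmul_of_midRel hw hm₁ hy)) (φ.trans'
      (cokerP_le_cokerP_pmul (b.trans' (b.symm' hw) (b.trans' h₀ hx)))
      (cokerP_pmul_of_midRel hx hm₂ hz))
  -- otherwise the upper points interleave, and the middle row is non-crossing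
  exact cokerP_pmul_of_midRel hy (ha.midRel_of_lt_of_lt hb hfb
    (hb.upper_lt_of_lower_lt hw hx hwx h₀) (hb.upper_lt_of_lower_lt hx hy hxy h₂₁)
    (hb.upper_lt_of_lower_lt hy hz hyz h₁₂) hm₁ hm₂) hz

lemma Planar.isPlanarEq_cokerP_pmul (ha : Planar a) (hb : Planar b) (hfb : FullDom b) :
    IsPlanarEq (cokerP (pmul a b)) :=
  (ha.nonCrossing_cokerP_pmul hb hfb).isPlanarEq

end CokerPmulPlanar

section RhoLeftCommute

variable {n : ℕ}

variable {a b : Ptn n}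

noncomputable def FullDom.lower (hfb : FullDom b) (m : Fin n) : Fin n := (hfb m).choose

lemma FullDom.rel_lower (hfb : FullDom b) (m : Fin n) : b.r (.inl m) (.inr (hfb.lower m)) :=
  (hfb m).choose_spec

lemma midRel_iff_cokerP_pmul_lower (hfb : FullDom b) {m m' : Fin n} :
    midRel a b m m' ↔ (cokerP (pmul a b)).r (hfb.lower m) (hfb.lower m') := by
  refine ⟨rel_of_midRel (s := Setoid.comap hfb.lower (cokerP (pmul a b)))
    (fun p q h => cokerP_pmul_of_midRel (hfb.rel_lower p) (midRel_of_coker h) (hfb.rel_lower q))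
    fun p q h => cokerP_le_cokerP_pmul
      (b.trans' (b.symm' (hfb.rel_lower p)) (b.trans' h (hfb.rel_lower q))), fun h => ?_⟩
  rcases pmul_inr_inr_iff.mp h with h | ⟨k, k', hk, hkk', hk'⟩
  · exact midRel_of_ker (b.trans' (hfb.rel_lower m) (b.trans' h (b.symm' (hfb.rel_lower m'))))
  · exact (midRel_of_ker (b.trans' (hfb.rel_lower m) (b.symm' hk))).trans
      (hkk'.trans (midRel_of_ker (b.trans' hk' (b.symm' (hfb.rel_lower m')))))

/-- The class of the lower point of an anchor of `coker a` cannot be nested in `coker (ab)`: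
an enclosing class would come from a middle-row path jumping over the anchor. -/
lemma Planar.unnested_cokerP_pmul_lower (ha : Planar a) (hb : Planar b) (hfb : FullDom b)
    {c : Fin n} (hc : c ∈ anchorsF (cokerP a)) : Unnested (cokerP (pmul a b)) (hfb.lower c) := by
  set φ := cokerP (pmul a b)
  set w := hfb.lower c
  have hw := hfb.rel_lower c
  rintro v ⟨b₁, hb₁, b₂, hb₂, -, -, hin⟩
  have hb₁₂ : φ.r b₁ b₂ := φ.trans' (φ.symm' hb₁) hb₂
  have hout : ∀ u, b.r (.inl c) (.inr u) → u ≠ b₁ ∧ u ≠ b₂ := fun u hu =>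
    have := hin u (cokerP_le_cokerP_pmul (b.trans' (b.symm' hw) hu))
    ⟨this.1.ne', this.2.ne⟩
  rcases pmul_inr_inr_iff.mp hb₁₂ with hζ | ⟨t₁, t₂, h₁, hm, h₂⟩
  · exact (hout _ (hb.rel_inl_inr_of_lt_of_lt hw hζ (hin w (φ.refl' w)).1
      (hin w (φ.refl' w)).2)).2 rfl
  have hnot : ¬ midRel a b t₁ c := fun h =>
    ((hin b₁ (φ.symm' (cokerP_pmul_of_midRel h₁ h hw))).1).false
  have ht₁ := hb.upper_lt_of_lower_lt h₁ hw (hin w (φ.refl' w)).1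
    fun h => (hout _ (b.trans' (b.symm' h) h₁)).1 rfl
  have ht₂ := hb.upper_lt_of_lower_lt hw h₂ (hin w (φ.refl' w)).2
    fun h => (hout _ (b.trans' h h₂)).2 rfl
  rcases exists_step_across_of_eqvGen (fun _ _ h => h.imp a.symm' b.symm') hm ht₁ ht₂ with
    h | ⟨g, g', hg | hg, hgc, hcg, hg₁⟩
  · exact hnot h
  · exact ha.isPlanarEq_cokerP.not_mem_anchorsF
      ((minCl_le _ ((cokerP a).symm' hg)).trans_lt hgc) hcg.le hc
  · exact hnot (midRel.trans hg₁ (midRel_of_ker (hb.rel_inl_of_le_of_le hfb hg hgc.le hcg.le)))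

variable [NeZero n]

lemma Planar.anchorBelow_cokerP_pmul_lower (ha : Planar a) (hb : Planar b) (hfb : FullDom b)
    (x : Fin n) : anchorBelow (cokerP (pmul a b)) (hfb.lower x) =
      minCl (cokerP (pmul a b)) (hfb.lower (anchorBelow (cokerP a) x)) := by
  set ε := cokerP a
  set φ := cokerP (pmul a b)
  set c := anchorBelow ε x
  have hφc : ∀ {x x'}, x ≤ x' → φ.r (hfb.lower x) (hfb.lower x') ∨ hfb.lower x < hfb.lower x' := by
    intro x x' hxx'
    by_cases h : b.r (.inl x) (.inl x')
    · exact .inl (cokerP_le_cokerP_pmul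
        (b.trans' (b.symm' (hfb.rel_lower x)) (b.trans' h (hfb.rel_lower x'))))
    · exact .inr (hb.lower_lt_of_upper_lt (hfb.rel_lower x) (hfb.rel_lower x')
        (hxx'.lt_of_ne fun h' => h (h' ▸ b.refl' _)) h)
  -- `x ≤ maxCl ε c`, and the lower point of `maxCl ε c` is `φ`-related to that of `c`
  have hβ : φ.r (hfb.lower c) (hfb.lower (maxCl ε c)) :=
    (midRel_iff_cokerP_pmul_lower hfb).mp (midRel_of_coker (maxCl_rel ε c))
  refine (ha.isPlanarEq_cokerP_pmul hb hfb).anchorBelow_eq_minCl_of_le_of_le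
    (ha.unnested_cokerP_pmul_lower hb hfb (anchorBelow_mem_anchorsF ε x)) ?_ ?_
  · rcases hφc (anchorBelow_le ε x) with h | h
    exacts [minCl_le φ h, (minCl_le_self φ _).trans h.le]
  · rcases hφc (ha.isPlanarEq_cokerP.le_maxCl_anchorBelow x) with h | h
    exacts [le_maxCl φ (φ.trans' hβ (φ.symm' h)), h.le.trans (le_maxCl φ hβ)]

lemma Planar.midRel_anchorBelow_iff (ha : Planar a) (hb : Planar b) (hfb : FullDom b)
    {x x' : Fin n} : midRel a b (anchorBelow (cokerP a) x) (anchorBelow (cokerP a) x') ↔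
      anchorBelow (cokerP (pmul a b)) (hfb.lower x) =
        anchorBelow (cokerP (pmul a b)) (hfb.lower x') := by
  rw [ha.anchorBelow_cokerP_pmul_lower hb hfb, ha.anchorBelow_cokerP_pmul_lower hb hfb,
    minCl_eq_minCl_iff, midRel_iff_cokerP_pmul_lower]

lemma Planar.exists_midRel_anchorBelow_iff (ha : Planar a) (hb : Planar b) (hfb : FullDom b)
    {x y : Fin n} : (∃ m, midRel a b (anchorBelow (cokerP a) x) m ∧ b.r (.inl m) (.inr y)) ↔
      anchorBelow (cokerP (pmul a b)) (hfb.lower x) = minCl (cokerP (pmul a b)) y := by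
  set c := anchorBelow (cokerP a) x
  rw [ha.anchorBelow_cokerP_pmul_lower hb hfb, minCl_eq_minCl_iff]
  refine ⟨fun ⟨m, hm, h⟩ => cokerP_pmul_of_midRel (hfb.rel_lower c) hm h, fun h => ?_⟩
  rcases pmul_inr_inr_iff.mp h with h | ⟨m, m', hm, hmm', hm'⟩
  · exact ⟨c, midRel_refl c, b.trans' (hfb.rel_lower c) h⟩
  · exact ⟨m', (midRel_of_ker (b.trans' (hfb.rel_lower c) (b.symm' hm))).trans hmm', hm'⟩

theorem Planar.rhoP_pmul_eq_pmul_rhoP (ha : Planar a) (hb : Planar b) (hfb : FullDom b) :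
    pmul (rhoP a) b = pmul b (rhoP (pmul a b)) := by
  set φ := cokerP (pmul a b)
  have hφ := ha.isPlanarEq_cokerP_pmul hb hfb
  have hc : ∀ y y', (cokerP b).r y y' → φ.r y y' := fun _ _ => cokerP_le_cokerP_pmul
  have hmid : midRel (dEta (cokerP a)) b = midRel a b := midRel_congr_left cokerP_dEta
  have hlower : ∀ {x m}, b.r (.inl x) (.inr m) → anchorBelow φ m = anchorBelow φ (hfb.lower x) :=
    fun h => hφ.anchorBelow_eq_of_rel (hc _ _ (b.trans' (b.symm' h) (hfb.rel_lower _)))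
  change pmul (dEta (cokerP a)) b = pmul b (dEta φ)
  refine ptn_ext (fun x x' => ?_) (fun x y => ?_) ?_
  · rw [dEta_pmul_inl_inl_iff, pmul_dEta_inl_inl_iff hφ hc, hmid,
      ha.midRel_anchorBelow_iff hb hfb]
    refine ⟨fun h => .inr ⟨_, _, hfb.rel_lower x, hfb.rel_lower x', h⟩, ?_⟩
    rintro (h | ⟨m, m', h, h', hm⟩)
    · exact hφ.anchorBelow_eq_of_rel (hc _ _
        (b.trans' (b.symm' (hfb.rel_lower x)) (b.trans' h (hfb.rel_lower x'))))
    · rwa [← hlower h, ← hlower h']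
  · rw [dEta_pmul_inl_inr_iff, pmul_dEta_inl_inr_iff hφ hc, hmid,
      ha.exists_midRel_anchorBelow_iff hb hfb]
    exact ⟨fun h => ⟨_, hfb.rel_lower x, h⟩, fun ⟨m, h, hm⟩ => hlower h ▸ hm⟩
  · rw [cokerP_pmul_dEta hφ hc]
    exact cokerP_pmul_congr_left cokerP_dEta

end RhoLeftCommute

section RhoProducts

variable {n : ℕ} [NeZero n] {a b : Ptn n}

lemma Planar.anchorBelow_cokerP_pmul_anchorBelow (hb : Planar b) (x : Fin n) :
    anchorBelow (cokerP (pmul a b)) (anchorBelow (cokerP b) x) =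
      anchorBelow (cokerP (pmul a b)) x := by
  set ψ := cokerP (pmul a b)
  refine le_antisymm (anchorBelow_mono (anchorBelow_le _ x)) ?_
  have h := le_anchorBelow (hb.anchorsF_cokerP_pmul_subset (anchorBelow_mem_anchorsF ψ x))
    (anchorBelow_le ψ x)
  exact (anchorBelow_anchorBelow x).symm.le.trans (anchorBelow_mono h)

lemma Planar.rhoP_pmul_rhoP_pmul (ha : Planar a) (hb : Planar b) (hfb : FullDom b) :
    pmul (rhoP b) (rhoP (pmul a b)) = rhoP (pmul a b) := by
  set ζ := cokerP b
  set ψ := cokerP (pmul a b)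
  have hψ := ha.isPlanarEq_cokerP_pmul hb hfb
  have hc : ∀ y y', (cokerP (dEta ζ)).r y y' → ψ.r y y' := fun _ _ h =>
    cokerP_le_cokerP_pmul (dEta_inr_inr_iff.mp h)
  have hstep := hb.anchorBelow_cokerP_pmul_anchorBelow (a := a)
  have hred : ∀ {x m}, anchorBelow ζ x = minCl ζ m → anchorBelow ψ x = anchorBelow ψ m := by
    intro x m h
    have hm := unnested_of_minCl_mem_anchorsF (h ▸ anchorBelow_mem_anchorsF ζ x)
    rw [← hstep x, ← hstep m, h, hb.isPlanarEq_cokerP.anchorBelow_eq_minCl hm]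
  change pmul (dEta ζ) (dEta ψ) = dEta ψ
  refine ptn_ext (fun x x' => ?_) (fun x y => ?_) ((cokerP_pmul_dEta hψ hc).trans cokerP_dEta.symm)
  · rw [pmul_dEta_inl_inl_iff hψ hc, dEta_inl_inl_iff, dEta_inl_inl_iff]
    constructor
    · rintro (h | ⟨m, m', h, h', hm⟩)
      · rw [← hstep x, h, hstep]
      · rw [hred h, hm, hred h']
    · exact fun h => .inr ⟨_, _, (minCl_anchorBelow x).symm, (minCl_anchorBelow x').symm,
        by rw [hstep, hstep, h]⟩
  · rw [pmul_dEta_inl_inr_iff hψ hc, dEta_inl_inr_iff]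
    exact ⟨fun ⟨m, h, hm⟩ => (hred h).trans hm,
      fun h => ⟨_, (minCl_anchorBelow x).symm, (hstep x).trans h⟩⟩

theorem Planar.rhoP_rhoP_pmul_rhoP (ha : Planar a) (hb : Planar b) :
    rhoP (pmul (rhoP a) (rhoP b)) = pmul (rhoP a) (rhoP b) := by
  have ha' := ha.isPlanarEq_cokerP.planar_dEta
  have hb' := hb.isPlanarEq_cokerP.planar_dEta
  have h := ha'.rhoP_pmul_eq_pmul_rhoP hb' fullDom_dEta
  rw [rhoP_dEta] at h
  have h' := ha'.rhoP_pmul_rhoP_pmul hb' fullDom_dEta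
  rw [rhoP_dEta] at h'
  exact (h.trans h').symm

theorem Planar.rhoP_pmul_rhoP_pmul_rhoP (ha : Planar a) (hb : Planar b) :
    pmul (pmul (rhoP a) (rhoP b)) (rhoP a) = pmul (rhoP b) (rhoP a) := by
  have h : pmul (rhoP b) (rhoP a) = pmul (rhoP a) (rhoP (pmul b (rhoP a))) :=
    hb.rhoP_pmul_eq_pmul_rhoP ha.isPlanarEq_cokerP.planar_dEta fullDom_dEta
  calc pmul (pmul (rhoP a) (rhoP b)) (rhoP a)
      = pmul (rhoP a) (pmul (rhoP a) (rhoP (pmul b (rhoP a)))) := by rw [pmul_assoc, h]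
    _ = pmul (rhoP a) (rhoP (pmul b (rhoP a))) := by rw [← pmul_assoc, ha.rhoP_pmul_self]
    _ = pmul (rhoP b) (rhoP a) := h.symm

end RhoProducts

theorem stmt19_general (n : ℕ) [NeZero n] :
    ∀ a ∈ PPfd n, ∀ b ∈ PPfd n,
      rhoP a ∈ DSet n ∧
      pmul a (rhoP a) = a ∧
      rhoP (rhoP a) = rhoP a ∧
      pmul (rhoP a) (rhoP a) = rhoP a ∧
      pmul (pmul (rhoP a) (rhoP b)) (rhoP a) = pmul (rhoP b) (rhoP a) ∧
      rhoP (pmul (rhoP a) (rhoP b)) = pmul (rhoP a) (rhoP b) ∧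
      pmul (rhoP (pmul a b)) (rhoP b) = rhoP (pmul a b) ∧
      rhoP (pmul a b) = rhoP (pmul (rhoP a) b) ∧
      pmul (rhoP a) b = pmul b (rhoP (pmul a b)) := by
  rintro a ⟨-, ha⟩ b ⟨hfb, hb⟩
  exact ⟨⟨cokerP a, ha.isPlanarEq_cokerP, rfl⟩, ha.pmul_rhoP, rhoP_rhoP a, ha.rhoP_pmul_self,
    ha.rhoP_pmul_rhoP_pmul_rhoP hb, ha.rhoP_rhoP_pmul_rhoP hb, hb.rhoP_pmul_pmul_rhoP,
    rhoP_pmul_eq_rhoP_rhoP_pmul a b, ha.rhoP_pmul_eq_pmul_rhoP hb hfb⟩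

/-- Proposition `prop:grrac`.  `PP_n^fd`, with the unary operation
`ρ(a) = d_{coker a}` (taking values in `D_n`), satisfies the grrac-monoid identities
(G1)–(G8). -/
theorem stmt19 (n : ℕ) (hn : 2 ≤ n) [NeZero n] :
    ∀ a ∈ PPfd n, ∀ b ∈ PPfd n,
      rhoP a ∈ DSet n ∧
      pmul a (rhoP a) = a ∧
      rhoP (rhoP a) = rhoP a ∧
      pmul (rhoP a) (rhoP a) = rhoP a ∧
      pmul (pmul (rhoP a) (rhoP b)) (rhoP a) = pmul (rhoP b) (rhoP a) ∧
      rhoP (pmul (rhoP a) (rhoP b)) = pmul (rhoP a) (rhoP b) ∧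
      pmul (rhoP (pmul a b)) (rhoP b) = rhoP (pmul a b) ∧
      rhoP (pmul a b) = rhoP (pmul (rhoP a) b) ∧
      pmul (rhoP a) b = pmul b (rhoP (pmul a b)) :=
  stmt19_general n

end PaperFDP
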